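/- arXiv:2504.00171 — 9 statements merged into one kernel-verified Lean document; each statement's English description precedes it below -/
import Mathlib

section
/- A pseudo-orbit map Po_f : M̃(f,δ) → M induces shadowing (i.e., for every ε > 0 there exists γ ∈ (0,δ] such that every γ-pseudo-orbit x satisfies d(f^i(Po_f(x)), x_i) ≤ ε for all i ∈ ℤ) if and only if it is a shadowing map. In particular, if f admits a shadowing map, then f has the shadowing property. -/
open Filter Metric Topology

variable {M : Type*}

/-- A `δ`-pseudo-orbit of `f`. -/
def IsPseudoOrbit [MetricSpace M] (f : M → M) (δ : ℝ) (x : ℤ → M) : Prop :=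
  ∀ i : ℤ, dist (x (i + 1)) (f (x i)) ≤ δ

/-- The set `M̃(f,δ)` of `δ`-pseudo-orbits, as a subset of `M^ℤ` (product topology). -/
def PseudoOrbits [MetricSpace M] (f : M → M) (δ : ℝ) : Set (ℤ → M) :=
  {x | IsPseudoOrbit f δ x}

/-- The shift `σ`. -/
def shiftSeq (x : ℤ → M) : ℤ → M := fun i => x (i + 1)

/-- The iterated shift `σ^i`. -/
def shiftIter (i : ℤ) (x : ℤ → M) : ℤ → M := fun j => x (j + i)

/-- The orbit map `orb_f(p)_i = f^i(p)`. -/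
def orbitMap (f : Equiv.Perm M) (p : M) : ℤ → M := fun i => (f ^ i) p

/-- The metric `d̃_s(x,y) = Σ_{i∈ℤ} 2^{-|i|} d(x_i,y_i)` on `M^ℤ`. -/
noncomputable def dtilde [MetricSpace M] (x y : ℤ → M) : ℝ :=
  ∑' i : ℤ, (2 : ℝ) ^ (-|i|) * dist (x i) (y i)

/-- A pseudo-orbit map: a continuous map on `M̃(f,δ)` (δ > 0) sending each true orbit
to its initial point. -/
def IsPseudoOrbitMap [MetricSpace M] (f : Equiv.Perm M) (δ : ℝ) (Po : (ℤ → M) → M) : Prop :=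
  0 < δ ∧ ContinuousOn Po (PseudoOrbits (⇑f) δ) ∧ ∀ p : M, Po (orbitMap f p) = p

/-- `Po` induces shadowing: for all `ε > 0` there is `γ ∈ (0,δ]` such that every
`γ`-pseudo-orbit `x` satisfies `d(f^i(Po x), x_i) ≤ ε` for all `i`. -/
def InducesShadowing [MetricSpace M] (f : Equiv.Perm M) (δ : ℝ) (Po : (ℤ → M) → M) : Prop :=
  ∀ ε > (0:ℝ), ∃ γ : ℝ, 0 < γ ∧ γ ≤ δ ∧ ∀ x ∈ PseudoOrbits (⇑f) γ,
    ∀ i : ℤ, dist ((f ^ i) (Po x)) (x i) ≤ ε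

/-- The defining condition of a shadowing map. -/
def ShadowingMapCond [MetricSpace M] (f : Equiv.Perm M) (δ : ℝ) (Sh : (ℤ → M) → M) : Prop :=
  ∀ ε > (0:ℝ), ∃ γ : ℝ, 0 < γ ∧ γ ≤ δ ∧ ∀ x ∈ PseudoOrbits (⇑f) γ,
    ∀ i : ℤ, dist ((f ^ i) (Sh x)) (Sh (shiftIter i x)) ≤ ε

/-- A shadowing map. -/
def IsShadowingMap [MetricSpace M] (f : Equiv.Perm M) (δ : ℝ) (Sh : (ℤ → M) → M) : Prop :=
  IsPseudoOrbitMap f δ Sh ∧ ShadowingMapCond f δ Sh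

/-- The shadowing property. -/
def ShadowingProperty [MetricSpace M] (f : Equiv.Perm M) : Prop :=
  ∀ ε > (0:ℝ), ∃ δ > (0:ℝ), ∀ x ∈ PseudoOrbits (⇑f) δ,
    ∃ p : M, ∀ i : ℤ, dist ((f ^ i) p) (x i) ≤ ε

/-- `x` is a two-sided limit pseudo-orbit: `d(f(x_i), x_{i+1}) → 0` as `|i| → ∞`. -/
def TwoSidedLimit [MetricSpace M] (f : M → M) (x : ℤ → M) : Prop :=
  Tendsto (fun i : ℤ => dist (f (x i)) (x (i + 1))) cofinite (nhds 0)

/-- The defining condition of an L-shadowing map. -/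
def LShadowingMapCond [MetricSpace M] (f : Equiv.Perm M) (δ : ℝ) (Sh : (ℤ → M) → M) : Prop :=
  ∀ ε > (0:ℝ), ∃ γ : ℝ, 0 < γ ∧ γ ≤ δ ∧ ∀ x ∈ PseudoOrbits (⇑f) γ, TwoSidedLimit (⇑f) x →
    (∀ i : ℤ, dist ((f ^ i) (Sh x)) (x i) ≤ ε) ∧
    Tendsto (fun i : ℤ => dist ((f ^ i) (Sh x)) (x i)) cofinite (nhds 0)

/-- An L-shadowing map. -/
def IsLShadowingMap [MetricSpace M] (f : Equiv.Perm M) (δ : ℝ) (Sh : (ℤ → M) → M) : Prop :=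
  IsPseudoOrbitMap f δ Sh ∧ LShadowingMapCond f δ Sh

/-- Shift-invariance of a pseudo-orbit map: `Sh(σ x) = f(Sh x)` on `M̃(f,δ)`. -/
def ShiftInvariant [MetricSpace M] (f : Equiv.Perm M) (δ : ℝ) (Sh : (ℤ → M) → M) : Prop :=
  ∀ x ∈ PseudoOrbits (⇑f) δ, Sh (shiftSeq x) = f (Sh x)

/-- Self-tuning of a pseudo-orbit map. -/
def HasSelfTuning [MetricSpace M] (f : Equiv.Perm M) (δ : ℝ) (Sh : (ℤ → M) → M) : Prop :=
  ∀ ε > (0:ℝ), ∃ γ > (0:ℝ), ∀ x ∈ PseudoOrbits (⇑f) δ, ∀ i : ℤ,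
    dtilde (shiftIter i x) (orbitMap f (x i)) < γ →
    dist ((f ^ i) (Sh x)) (Sh (shiftIter i x)) ≤ ε

/-- The connecting map `con_f(p,q)`. -/
def connMap (f : Equiv.Perm M) (p q : M) : ℤ → M :=
  fun i => if i < 0 then (f ^ i) p else (f ^ i) q

/-- Local stable set `W_ε^s(p)`. -/
def Ws [MetricSpace M] (f : Equiv.Perm M) (ε : ℝ) (p : M) : Set M :=
  {q | ∀ n : ℕ, dist ((f ^ (n : ℤ)) p) ((f ^ (n : ℤ)) q) ≤ ε}

/-- Local unstable set `W_ε^u(p)`. -/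
def Wu [MetricSpace M] (f : Equiv.Perm M) (ε : ℝ) (p : M) : Set M :=
  {q | ∀ n : ℕ, dist ((f ^ (-(n : ℤ))) p) ((f ^ (-(n : ℤ))) q) ≤ ε}

/-- Stable set `W^s(p)`. -/
def WsLim [MetricSpace M] (f : Equiv.Perm M) (p : M) : Set M :=
  {q | Tendsto (fun n : ℕ => dist ((f ^ (n : ℤ)) p) ((f ^ (n : ℤ)) q)) atTop (nhds 0)}

/-- Unstable set `W^u(p)`. -/
def WuLim [MetricSpace M] (f : Equiv.Perm M) (p : M) : Set M :=
  {q | Tendsto (fun n : ℕ => dist ((f ^ (-(n : ℤ))) p) ((f ^ (-(n : ℤ))) q)) atTop (nhds 0)}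

/-- A shadowing bracket on `Δ_δ`. -/
def IsShadowingBracket [MetricSpace M] (f : Equiv.Perm M) (δ : ℝ) (br : M → M → M) : Prop :=
  0 < δ ∧ ContinuousOn (fun pq : M × M => br pq.1 pq.2) {pq : M × M | dist pq.1 pq.2 ≤ δ} ∧
  (∀ p : M, br p p = p) ∧
  ∀ ε > (0:ℝ), ∃ γ : ℝ, 0 < γ ∧ γ ≤ δ ∧
    ∀ p q : M, dist p q ≤ γ → br p q ∈ Ws f ε q ∩ Wu f ε p

/-- An L-bracket on `Δ_δ`. -/
def IsLBracket [MetricSpace M] (f : Equiv.Perm M) (δ : ℝ) (br : M → M → M) : Prop :=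
  0 < δ ∧ ContinuousOn (fun pq : M × M => br pq.1 pq.2) {pq : M × M | dist pq.1 pq.2 ≤ δ} ∧
  (∀ p : M, br p p = p) ∧
  ∀ ε > (0:ℝ), ∃ γ : ℝ, 0 < γ ∧ γ ≤ δ ∧
    ∀ p q : M, dist p q ≤ γ →
      br p q ∈ (Ws f ε q ∩ WsLim f q) ∩ (Wu f ε p ∩ WuLim f p)

/-- cw-expansivity. -/
def CWExpansive [MetricSpace M] (f : Equiv.Perm M) : Prop :=
  ∃ ξ > (0:ℝ), ∀ C : Set M, IsConnected C →
    (∀ i : ℤ, Metric.diam ((f ^ i) '' C) ≤ ξ) → C.Subsingleton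

/-- Expansivity. -/
def Expansive [MetricSpace M] (f : Equiv.Perm M) : Prop :=
  ∃ ξ > (0:ℝ), ∀ p q : M, p ≠ q → ∃ i : ℤ, ξ < dist ((f ^ i) p) ((f ^ i) q)


private lemma po_mono' [MetricSpace M] {f : M → M} {γ δ : ℝ} (h : γ ≤ δ) :
    PseudoOrbits f γ ⊆ PseudoOrbits f δ := fun _ hx i => (hx i).trans h

private lemma po_shift' [MetricSpace M] {f : M → M} {γ : ℝ} {x : ℤ → M}
    (hx : x ∈ PseudoOrbits f γ) (i : ℤ) : shiftIter i x ∈ PseudoOrbits f γ := by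
  intro j
  have h := hx (j + i)
  simpa [shiftIter, add_right_comm] using h

private lemma orbit_of_zero' [MetricSpace M] (f : Equiv.Perm M) {x : ℤ → M}
    (hx : x ∈ PseudoOrbits (⇑f) 0) : x = orbitMap f (x 0) := by
  have h : ∀ i : ℤ, x (i + 1) = f (x i) := by
    intro i
    have h0 : dist (x (i + 1)) (f (x i)) = 0 := le_antisymm (hx i) dist_nonneg
    exact dist_eq_zero.mp h0
  funext i
  induction i using Int.induction_on with
  | zero => simp [orbitMap]
  | succ n ih =>
      rw [h n, ih]
      show f ((f ^ (n : ℤ)) (x 0)) = orbitMap f (x 0) ((n : ℤ) + 1)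
      rw [orbitMap, show ((n : ℤ) + 1) = 1 + (n : ℤ) by ring, zpow_add, zpow_one,
        Equiv.Perm.mul_apply]
  | pred n ih =>
      have h2 : x (-(n : ℤ)) = f (x (-(n : ℤ) - 1)) := by
        have := h (-(n : ℤ) - 1); rwa [sub_add_cancel] at this
      have h3 : x (-(n : ℤ) - 1) = f.symm (x (-(n : ℤ))) := by
        rw [h2, Equiv.symm_apply_apply]
      rw [h3, ih]
      show f.symm ((f ^ (-(n : ℤ))) (x 0)) = orbitMap f (x 0) (-(n : ℤ) - 1)
      rw [orbitMap, show (-(n : ℤ) - 1) = (-1) + (-(n : ℤ)) by ring, zpow_add,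
        Equiv.Perm.mul_apply, zpow_neg_one]
      rfl

private lemma po_closed' [MetricSpace M] {f : M → M} (hf : Continuous f) (δ : ℝ) :
    IsClosed (PseudoOrbits f δ) := by
  have heq : PseudoOrbits f δ = ⋂ i : ℤ, {x : ℤ → M | dist (x (i + 1)) (f (x i)) ≤ δ} := by
    ext x; simp [PseudoOrbits, IsPseudoOrbit, Set.mem_iInter]
  rw [heq]
  refine isClosed_iInter fun i => isClosed_le ?_ continuous_const
  exact (continuous_apply (i + 1)).dist (hf.comp (continuous_apply i))

private lemma key' [MetricSpace M] [CompactSpace M] (f : Equiv.Perm M) (hf : Continuous (⇑f))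
    {δ : ℝ} {Po : (ℤ → M) → M} (hPo : IsPseudoOrbitMap f δ Po) :
    ∀ ε > (0:ℝ), ∃ γ : ℝ, 0 < γ ∧ γ ≤ δ ∧
      ∀ x ∈ PseudoOrbits (⇑f) γ, dist (Po x) (x 0) ≤ ε := by
  obtain ⟨hδ, hcont, horb⟩ := hPo
  intro ε hε
  set g : (ℤ → M) → ℝ := fun x => dist (Po x) (x 0) with hg
  have hgc : ContinuousOn g (PseudoOrbits (⇑f) δ) :=
    continuous_dist.comp_continuousOn (hcont.prodMk (continuous_apply 0).continuousOn)
  set s : Set (ℤ → M) := PseudoOrbits (⇑f) δ ∩ g ⁻¹' Set.Ici ε with hs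
  have hsc : IsClosed s :=
    hgc.preimage_isClosed_of_isClosed (po_closed' hf δ) isClosed_Ici
  have hscomp : IsCompact s := hsc.isCompact
  set t : ℕ → Set (ℤ → M) := fun n => PseudoOrbits (⇑f) (min δ (1 / (n + 1))) with ht
  have htc : ∀ n, IsClosed (t n) := fun n => po_closed' hf _
  have hdir : Directed (· ⊇ ·) t := by
    have hanti : ∀ m n : ℕ, m ≤ n → t n ⊆ t m := by
      intro m n hmn
      refine po_mono' (min_le_min le_rfl (one_div_le_one_div_of_le (by positivity) ?_))
      exact_mod_cast Nat.add_le_add_right hmn 1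
    intro m n
    exact ⟨max m n, hanti _ _ (le_max_left m n), hanti _ _ (le_max_right m n)⟩
  have hempty : s ∩ ⋂ n, t n = ∅ := by
    rw [Set.eq_empty_iff_forall_notMem]
    rintro x ⟨⟨_, hxg⟩, hxt⟩
    rw [Set.mem_iInter] at hxt
    have hx0 : x ∈ PseudoOrbits (⇑f) 0 := by
      intro i
      by_contra hlt
      push_neg at hlt
      obtain ⟨n, hn⟩ := exists_nat_one_div_lt hlt
      exact absurd ((hxt n i).trans (min_le_right _ _)) (not_le.mpr hn)
    have := horb (x 0)
    rw [← orbit_of_zero' f hx0] at this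
    have : g x = 0 := by simp [hg, this]
    simp only [Set.mem_preimage, Set.mem_Ici] at hxg
    linarith
  obtain ⟨n, hn⟩ := hscomp.elim_directed_family_closed t htc hempty hdir
  refine ⟨min δ (1 / (n + 1)), lt_min hδ (by positivity), min_le_left _ _, ?_⟩
  intro x hx
  by_contra hgt
  push_neg at hgt
  have : x ∈ s ∩ t n := ⟨⟨po_mono' (min_le_left _ _) hx, le_of_lt hgt⟩, hx⟩
  rw [hn] at this
  exact this

/-- Proposition 3.2: a pseudo-orbit map induces shadowing iff it is a
shadowing map; in particular every homeomorphism with a shadowing map has the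
shadowing property. -/
theorem stmt2 {M : Type*} [MetricSpace M] [CompactSpace M]
    (f : Equiv.Perm M) (hf : Continuous (⇑f)) (hf' : Continuous (⇑f.symm)) :
    (∀ δ : ℝ, ∀ Po : (ℤ → M) → M, IsPseudoOrbitMap f δ Po →
      (InducesShadowing f δ Po ↔ IsShadowingMap f δ Po)) ∧
    ((∃ δ : ℝ, ∃ Sh : (ℤ → M) → M, IsShadowingMap f δ Sh) → ShadowingProperty f) := by
  have main : ∀ δ : ℝ, ∀ Po : (ℤ → M) → M, IsPseudoOrbitMap f δ Po →
      (InducesShadowing f δ Po ↔ IsShadowingMap f δ Po) := by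
    intro δ Po hPo
    constructor
    · intro h
      refine ⟨hPo, ?_⟩
      intro ε hε
      obtain ⟨γ, hγ0, hγδ, hsh⟩ := h (ε / 2) (by positivity)
      refine ⟨γ, hγ0, hγδ, ?_⟩
      intro x hx i
      have h1 := hsh x hx i
      have h2 := hsh (shiftIter i x) (po_shift' hx i) 0
      simp only [zpow_zero, Equiv.Perm.coe_one, id_eq, shiftIter, zero_add] at h2
      calc dist ((f ^ i) (Po x)) (Po (shiftIter i x))
          ≤ dist ((f ^ i) (Po x)) (x i) + dist (x i) (Po (shiftIter i x)) :=
            dist_triangle _ _ _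
        _ ≤ ε / 2 + ε / 2 := add_le_add h1 (by rw [dist_comm]; exact h2)
        _ = ε := by ring
    · rintro ⟨_, hsh⟩
      intro ε hε
      obtain ⟨γ1, hγ1, hγ1δ, h1⟩ := hsh (ε / 2) (by positivity)
      obtain ⟨γ2, hγ2, hγ2δ, h2⟩ := key' f hf hPo (ε / 2) (by positivity)
      refine ⟨min γ1 γ2, lt_min hγ1 hγ2, (min_le_left _ _).trans hγ1δ, ?_⟩
      intro x hx i
      have hx1 : x ∈ PseudoOrbits (⇑f) γ1 := po_mono' (min_le_left _ _) hx
      have hx2 : shiftIter i x ∈ PseudoOrbits (⇑f) γ2 :=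
        po_shift' (po_mono' (min_le_right _ _) hx) i
      have ha := h1 x hx1 i
      have hb := h2 _ hx2
      calc dist ((f ^ i) (Po x)) (x i)
          ≤ dist ((f ^ i) (Po x)) (Po (shiftIter i x)) + dist (Po (shiftIter i x)) (x i) :=
            dist_triangle _ _ _
        _ ≤ ε / 2 + ε / 2 := add_le_add ha (by simpa [shiftIter] using hb)
        _ = ε := by ring
  refine ⟨main, ?_⟩
  rintro ⟨δ, Sh, hSh⟩
  have hInd := (main δ Sh hSh.1).mpr hSh
  intro ε hε
  obtain ⟨γ, hγ0, _, h⟩ := hInd ε hε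
  exact ⟨γ, hγ0, fun x hx => ⟨Sh x, h x hx⟩⟩
end

section
/- If Sh_f : M̃(f,δ) → M is a shadowing map, then the induced bracket [p,q] = Sh_f(con_f(p,q)), defined for (p,q) ∈ Δ_δ, is a shadowing bracket. -/
open Filter Metric Topology

variable {M : Type*}

section Aux

open Uniformity

private lemma pow_continuous' {M : Type*} [TopologicalSpace M] (g : Equiv.Perm M)
    (hg : Continuous ⇑g) (n : ℕ) : Continuous ⇑(g ^ n) := by
  induction n with
  | zero => simpa using continuous_id
  | succ n ih =>
    have : ⇑(g ^ (n + 1)) = ⇑(g ^ n) ∘ ⇑g := by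
      funext z; simp [pow_succ, Equiv.Perm.mul_apply]
    rw [this]; exact ih.comp hg

private lemma zpow_continuous {M : Type*} [TopologicalSpace M] (f : Equiv.Perm M)
    (hf : Continuous ⇑f) (hf' : Continuous ⇑f.symm) (i : ℤ) : Continuous ⇑(f ^ i) := by
  cases i with
  | ofNat n => simpa using pow_continuous' f hf n
  | negSucc n =>
    have h1 : f ^ (Int.negSucc n) = (f⁻¹) ^ (n + 1) := by
      rw [zpow_negSucc, inv_pow]
    rw [h1]
    exact pow_continuous' f⁻¹ hf' (n + 1)

private lemma zpow_succ_apply {M : Type*} (f : Equiv.Perm M) (i : ℤ) (z : M) :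
    (f ^ (i + 1)) z = f ((f ^ i) z) := by
  rw [add_comm, zpow_add, zpow_one]; rfl

private lemma zpow_add_apply {M : Type*} (f : Equiv.Perm M) (a b : ℤ) (z : M) :
    (f ^ (a + b)) z = (f ^ a) ((f ^ b) z) := by
  rw [zpow_add]; rfl

private lemma connMap_mem {M : Type*} [MetricSpace M] (f : Equiv.Perm M) {p q : M} {c : ℝ}
    (h : dist p q ≤ c) : connMap f p q ∈ PseudoOrbits (⇑f) c := by
  have hc : 0 ≤ c := le_trans dist_nonneg h
  intro i
  by_cases h2 : i + 1 < 0
  · have h1 : i < 0 := by omega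
    simp [connMap, h1, h2, ← zpow_succ_apply, hc]
  · by_cases h1 : i < 0
    · have h1' : i = -1 := by omega
      subst h1'
      simp only [connMap, if_pos h1, if_neg h2]
      rw [← zpow_succ_apply]
      norm_num [dist_comm]
      exact h
    · simp [connMap, h1, h2, ← zpow_succ_apply, hc]

private lemma shiftIter_mem {M : Type*} [MetricSpace M] {f : M → M} {c : ℝ} {x : ℤ → M}
    (hx : x ∈ PseudoOrbits f c) (i : ℤ) : shiftIter i x ∈ PseudoOrbits f c := by
  intro j
  have := hx (j + i)
  simpa [shiftIter, add_right_comm] using this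

private lemma orbitMap_mem {M : Type*} [MetricSpace M] (f : Equiv.Perm M) (p : M) {c : ℝ}
    (hc : 0 ≤ c) : orbitMap f p ∈ PseudoOrbits (⇑f) c := fun i => by
  simp [orbitMap, ← zpow_succ_apply, hc]

private lemma pseudoOrbits_mono {M : Type*} [MetricSpace M] {f : M → M} {c c' : ℝ}
    (h : c ≤ c') : PseudoOrbits f c ⊆ PseudoOrbits f c' :=
  fun _ hx i => le_trans (hx i) h

private lemma pseudoOrbits_isClosed {M : Type*} [MetricSpace M] {f : M → M}
    (hf : Continuous f) (c : ℝ) : IsClosed (PseudoOrbits f c) := by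
  have : PseudoOrbits f c = ⋂ i : ℤ, {x : ℤ → M | dist (x (i + 1)) (f (x i)) ≤ c} := by
    ext x; simp [PseudoOrbits, IsPseudoOrbit, Set.mem_iInter]
  rw [this]
  refine isClosed_iInter fun i => isClosed_le ?_ continuous_const
  exact (continuous_apply (i + 1)).dist (hf.comp (continuous_apply i))

private lemma pi_entourage {M : Type*} [MetricSpace M] {U : Set ((ℤ → M) × (ℤ → M))}
    (hU : U ∈ 𝓤 (ℤ → M)) :
    ∃ (m : ℕ) (r : ℝ), 0 < r ∧ ∀ x y : ℤ → M,
      (∀ j : ℤ, |j| ≤ (m : ℤ) → dist (x j) (y j) < r) → (x, y) ∈ U := by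
  rw [Pi.uniformity, Filter.mem_iInf'] at hU
  obtain ⟨I, hIfin, V, hV, hVuniv, hUeq, -⟩ := hU
  choose W hW hWV using fun j => Filter.mem_comap.mp (hV j)
  choose r hr hrW using fun j => Metric.mem_uniformity_dist.mp (hW j)
  classical
  set F : Finset ℤ := insert 0 hIfin.toFinset with hF
  have hFne : F.Nonempty := ⟨0, Finset.mem_insert_self _ _⟩
  refine ⟨F.sup fun j => j.natAbs, F.inf' hFne r, ?_, ?_⟩
  · exact (Finset.lt_inf'_iff _).mpr fun k _ => hr k
  · intro x y hxy
    rw [hUeq]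
    refine Set.mem_iInter₂.mpr fun j hj => ?_
    have hjF : j ∈ F := Finset.mem_insert_of_mem (hIfin.mem_toFinset.mpr hj)
    have hjm : |j| ≤ ((F.sup fun j => j.natAbs : ℕ) : ℤ) := by
      rw [Int.abs_eq_natAbs]
      exact_mod_cast Finset.le_sup (f := fun j : ℤ => j.natAbs) hjF
    have hd : dist (x j) (y j) < r j :=
      lt_of_lt_of_le (hxy j hjm) (Finset.inf'_le _ hjF)
    exact hWV j (hrW j hd)

private lemma unif_A {M : Type*} [MetricSpace M] [CompactSpace M] {K : Set (ℤ → M)}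
    (hK : IsCompact K) {Sh : (ℤ → M) → M} (hSh : ContinuousOn Sh K) {ε : ℝ} (hε : 0 < ε) :
    ∃ (m : ℕ) (r : ℝ), 0 < r ∧ ∀ x ∈ K, ∀ y ∈ K,
      (∀ j : ℤ, |j| ≤ (m : ℤ) → dist (x j) (y j) < r) → dist (Sh x) (Sh y) < ε := by
  have huc := hK.uniformContinuousOn_of_continuous hSh
  have hmem : ((fun xy : (ℤ → M) × (ℤ → M) => (Sh xy.1, Sh xy.2)) ⁻¹'
      {p : M × M | dist p.1 p.2 < ε}) ∈ 𝓤 (ℤ → M) ⊓ Filter.principal (K ×ˢ K) :=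
    huc (Metric.dist_mem_uniformity hε)
  rw [Filter.mem_inf_iff] at hmem
  obtain ⟨U, hU, T, hT, hUT⟩ := hmem
  obtain ⟨m, r, hr, h⟩ := pi_entourage hU
  refine ⟨m, r, hr, fun x hx y hy hclose => ?_⟩
  have hxyT : (x, y) ∈ T := Filter.mem_principal.mp hT (Set.mk_mem_prod hx hy)
  have : (x, y) ∈ U ∩ T := ⟨h x y hclose, hxyT⟩
  rw [← hUT] at this
  exact this

private lemma unif_B {M : Type*} [MetricSpace M] [CompactSpace M] (f : Equiv.Perm M)
    (hf : Continuous ⇑f) (hf' : Continuous ⇑f.symm) (m : ℕ) {r : ℝ} (hr : 0 < r) :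
    ∃ γ : ℝ, 0 < γ ∧ ∀ p q : M, dist p q ≤ γ → ∀ k : ℤ, |k| ≤ (m : ℤ) →
      dist ((f ^ k) p) ((f ^ k) q) < r := by
  have H : ∀ k : ℤ, ∃ γ : ℝ, 0 < γ ∧ ∀ p q : M,
      dist p q ≤ γ → dist ((f ^ k) p) ((f ^ k) q) < r := by
    intro k
    have huc := CompactSpace.uniformContinuous_of_continuous (zpow_continuous f hf hf' k)
    rw [Metric.uniformContinuous_iff] at huc
    obtain ⟨γ, hγ, hconc⟩ := huc r hr
    exact ⟨γ / 2, by positivity, fun p q hpq => hconc (lt_of_le_of_lt hpq (by linarith))⟩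
  choose γ hγ hγ' using H
  classical
  set F : Finset ℤ := Finset.Icc (-(m : ℤ)) m with hF
  have hFne : F.Nonempty := ⟨0, by simp [hF]⟩
  refine ⟨F.inf' hFne γ, (Finset.lt_inf'_iff _).mpr fun k _ => hγ k, ?_⟩
  intro p q hpq k hk
  have hkF : k ∈ F := by
    rw [hF, Finset.mem_Icc]
    exact abs_le.mp hk
  exact hγ' k p q (le_trans hpq (Finset.inf'_le _ hkF))

end Aux

/-- Proposition 3.10: the bracket induced by a shadowing map,
`[p,q] = Sh_f(con_f(p,q))` on `Δ_δ`, is a shadowing bracket. -/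
theorem stmt4 {M : Type*} [MetricSpace M] [CompactSpace M]
    (f : Equiv.Perm M) (hf : Continuous (⇑f)) (hf' : Continuous (⇑f.symm))
    (δ : ℝ) (Sh : (ℤ → M) → M) (hSh : IsShadowingMap f δ Sh) :
    IsShadowingBracket f δ (fun p q => Sh (connMap f p q)) := by
  obtain ⟨⟨hδ, hcontSh, hPo⟩, hcond⟩ := hSh
  have hKclosed : IsClosed (PseudoOrbits (⇑f) δ) := pseudoOrbits_isClosed hf δ
  have hKcompact : IsCompact (PseudoOrbits (⇑f) δ) := hKclosed.isCompact
  have hconn : Continuous fun pq : M × M => connMap f pq.1 pq.2 := by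
    apply continuous_pi
    intro i
    by_cases hi : i < 0
    · simpa [connMap, hi, Function.comp_def] using (zpow_continuous f hf hf' i).comp continuous_fst
    · simpa [connMap, hi, Function.comp_def] using (zpow_continuous f hf hf' i).comp continuous_snd
  refine ⟨hδ, ?_, ?_, ?_⟩
  · exact hcontSh.comp hconn.continuousOn fun pq hpq => connMap_mem f hpq
  · intro p
    have h1 : connMap f p p = orbitMap f p := by
      funext i; simp [connMap, orbitMap]
    simp only [h1]
    exact hPo p
  · intro ε hε
    obtain ⟨γ₁, hγ₁, hγ₁δ, hshad⟩ := hcond (ε / 2) (by linarith)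
    obtain ⟨m, r, hr, hA⟩ := unif_A hKcompact hcontSh (show (0:ℝ) < ε / 2 by linarith)
    obtain ⟨γ₂, hγ₂, hB⟩ := unif_B f hf hf' m hr
    refine ⟨min γ₁ γ₂, lt_min hγ₁ hγ₂, le_trans (min_le_left _ _) hγ₁δ, ?_⟩
    intro p q hpq
    set x := connMap f p q with hx
    have hxγ₁ : x ∈ PseudoOrbits (⇑f) γ₁ := connMap_mem f (hpq.trans (min_le_left _ _))
    have hxδ : x ∈ PseudoOrbits (⇑f) δ := pseudoOrbits_mono hγ₁δ hxγ₁
    have hpqγ₂ : dist p q ≤ γ₂ := hpq.trans (min_le_right _ _)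
    constructor
    · -- stable part
      intro n
      have h1 : dist ((f ^ (n : ℤ)) (Sh x)) (Sh (shiftIter (n : ℤ) x)) ≤ ε / 2 :=
        hshad x hxγ₁ (n : ℤ)
      have hy1 : shiftIter (n : ℤ) x ∈ PseudoOrbits (⇑f) δ := shiftIter_mem hxδ _
      have hy2 : orbitMap f ((f ^ (n : ℤ)) q) ∈ PseudoOrbits (⇑f) δ :=
        orbitMap_mem f _ hδ.le
      have hclose : ∀ j : ℤ, |j| ≤ (m : ℤ) →
          dist (shiftIter (n : ℤ) x j) (orbitMap f ((f ^ (n : ℤ)) q) j) < r := by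
        intro j hj
        have hj' := abs_le.mp hj
        simp only [shiftIter, orbitMap, hx, connMap]
        rw [← zpow_add_apply]
        by_cases hjn : j + (n : ℤ) < 0
        · rw [if_pos hjn]
          refine hB p q hpqγ₂ (j + (n : ℤ)) ?_
          rw [abs_le]; omega
        · rw [if_neg hjn]
          simpa using hr
      have h2 : dist (Sh (shiftIter (n : ℤ) x)) (Sh (orbitMap f ((f ^ (n : ℤ)) q))) < ε / 2 :=
        hA _ hy1 _ hy2 hclose
      rw [hPo] at h2
      have htri := dist_triangle ((f ^ (n : ℤ)) (Sh x)) (Sh (shiftIter (n : ℤ) x))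
        ((f ^ (n : ℤ)) q)
      have : dist ((f ^ (n : ℤ)) (Sh x)) ((f ^ (n : ℤ)) q) ≤ ε := by linarith
      rw [dist_comm] at this
      exact this
    · -- unstable part
      intro n
      have h1 : dist ((f ^ (-(n : ℤ))) (Sh x)) (Sh (shiftIter (-(n : ℤ)) x)) ≤ ε / 2 :=
        hshad x hxγ₁ (-(n : ℤ))
      have hy1 : shiftIter (-(n : ℤ)) x ∈ PseudoOrbits (⇑f) δ := shiftIter_mem hxδ _
      have hy2 : orbitMap f ((f ^ (-(n : ℤ))) p) ∈ PseudoOrbits (⇑f) δ :=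
        orbitMap_mem f _ hδ.le
      have hclose : ∀ j : ℤ, |j| ≤ (m : ℤ) →
          dist (shiftIter (-(n : ℤ)) x j) (orbitMap f ((f ^ (-(n : ℤ))) p) j) < r := by
        intro j hj
        have hj' := abs_le.mp hj
        simp only [shiftIter, orbitMap, hx, connMap]
        rw [← zpow_add_apply]
        by_cases hjn : j + (-(n : ℤ)) < 0
        · rw [if_pos hjn]
          simpa using hr
        · rw [if_neg hjn]
          rw [dist_comm]
          refine hB p q hpqγ₂ (j + (-(n : ℤ))) ?_
          rw [abs_le]; omega
      have h2 : dist (Sh (shiftIter (-(n : ℤ)) x)) (Sh (orbitMap f ((f ^ (-(n : ℤ))) p))) <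
          ε / 2 := hA _ hy1 _ hy2 hclose
      rw [hPo] at h2
      have htri := dist_triangle ((f ^ (-(n : ℤ))) (Sh x)) (Sh (shiftIter (-(n : ℤ)) x))
        ((f ^ (-(n : ℤ))) p)
      have : dist ((f ^ (-(n : ℤ))) (Sh x)) ((f ^ (-(n : ℤ))) p) ≤ ε := by linarith
      rw [dist_comm] at this
      exact this
end

section
/- If f is cw-expansive and admits a shadowing bracket, then f is cw₁-expansive. -/
open Filter Metric Topology

variable {M : Type*}

/-- cw₁-expansivity: there is `ξ > 0` such that every `ξ`-stable continuum meets every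
`ξ`-unstable continuum in at most one point. -/
def CW1Expansive {M : Type*} [MetricSpace M] (f : Equiv.Perm M) : Prop :=
  ∃ ξ > (0:ℝ), ∀ Cs Cu : Set M,
    IsClosed Cs → IsConnected Cs → IsClosed Cu → IsConnected Cu →
    (∀ n : ℕ, Metric.diam ((f ^ (n : ℤ)) '' Cs) ≤ ξ) →
    (∀ n : ℕ, Metric.diam ((f ^ (-(n : ℤ))) '' Cu) ≤ ξ) →
    (Cs ∩ Cu).Subsingleton

/-- Theorem 3.11: if `f` is cw-expansive and has a shadowing bracket then
`f` is cw₁-expansive. -/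
theorem stmt5 {M : Type*} [MetricSpace M] [CompactSpace M]
    (f : Equiv.Perm M) (hf : Continuous (⇑f)) (hf' : Continuous (⇑f.symm))
    (hcw : CWExpansive f)
    (hbr : ∃ δ : ℝ, ∃ br : M → M → M, IsShadowingBracket f δ br) :
    CW1Expansive f := by
  obtain ⟨ξ₀, hξ₀, hcw⟩ := hcw
  obtain ⟨δ, br, hδ, hcont, hdiag, hcond⟩ := hbr
  obtain ⟨γ, hγ, hγδ, hbrack⟩ := hcond (ξ₀/4) (by positivity)
  refine ⟨min γ (ξ₀/4), lt_min hγ (by positivity), ?_⟩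
  intro Cs Cu _ hCs _ hCu hsd hud x hx y hy
  have hξγ : min γ (ξ₀/4) ≤ γ := min_le_left _ _
  have hξ4 : min γ (ξ₀/4) ≤ ξ₀/4 := min_le_right _ _
  -- forward distances within Cs
  have hdCs : ∀ p ∈ Cs, ∀ q ∈ Cs, ∀ n : ℕ,
      dist ((f^(n:ℤ)) p) ((f^(n:ℤ)) q) ≤ min γ (ξ₀/4) := by
    intro p hp q hq n
    exact le_trans (Metric.dist_le_diam_of_mem Metric.isBounded_of_compactSpace
      (Set.mem_image_of_mem _ hp) (Set.mem_image_of_mem _ hq)) (hsd n)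
  -- backward distances within Cu
  have hdCu : ∀ p ∈ Cu, ∀ q ∈ Cu, ∀ n : ℕ,
      dist ((f^(-(n:ℤ))) p) ((f^(-(n:ℤ))) q) ≤ min γ (ξ₀/4) := by
    intro p hp q hq n
    exact le_trans (Metric.dist_le_diam_of_mem Metric.isBounded_of_compactSpace
      (Set.mem_image_of_mem _ hp) (Set.mem_image_of_mem _ hq)) (hud n)
  have hxyCs : dist x y ≤ min γ (ξ₀/4) := by
    simpa using hdCs x hx.1 y hy.1 0
  -- the orbit of br x c stays near the orbit of x, for c ∈ Cs
  have hD : ∀ c ∈ Cs, ∀ i : ℤ, dist ((f^i) (br x c)) ((f^i) x) ≤ ξ₀/2 := by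
    intro c hc i
    have hxc : dist x c ≤ γ := le_trans (by simpa using hdCs x hx.1 c hc 0) hξγ
    obtain ⟨hWs, hWu⟩ := hbrack x c hxc
    rcases le_or_gt 0 i with h | h
    · obtain ⟨n, rfl⟩ : ∃ n : ℕ, (n:ℤ) = i := ⟨i.toNat, Int.toNat_of_nonneg h⟩
      calc dist ((f^(n:ℤ)) (br x c)) ((f^(n:ℤ)) x)
          ≤ dist ((f^(n:ℤ)) (br x c)) ((f^(n:ℤ)) c)
            + dist ((f^(n:ℤ)) c) ((f^(n:ℤ)) x) := dist_triangle _ _ _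
        _ ≤ ξ₀/4 + ξ₀/4 :=
            add_le_add (by simpa [dist_comm] using hWs n)
              (le_trans (hdCs c hc x hx.1 n) hξ4)
        _ = ξ₀/2 := by ring
    · obtain ⟨n, rfl⟩ : ∃ n : ℕ, -(n:ℤ) = i :=
        ⟨(-i).toNat, by rw [Int.toNat_of_nonneg (by omega)]; omega⟩
      have h1 : dist ((f^(-(n:ℤ))) (br x c)) ((f^(-(n:ℤ))) x) ≤ ξ₀/4 := by
        simpa [dist_comm] using hWu n
      linarith
  -- the orbit of br c y stays near the orbit of y, for c ∈ Cu
  have hE : ∀ c ∈ Cu, ∀ i : ℤ, dist ((f^i) (br c y)) ((f^i) y) ≤ ξ₀/2 := by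
    intro c hc i
    have hcy : dist c y ≤ γ := le_trans (by simpa using hdCu c hc y hy.2 0) hξγ
    obtain ⟨hWs, hWu⟩ := hbrack c y hcy
    rcases le_or_gt 0 i with h | h
    · obtain ⟨n, rfl⟩ : ∃ n : ℕ, (n:ℤ) = i := ⟨i.toNat, Int.toNat_of_nonneg h⟩
      have h1 : dist ((f^(n:ℤ)) (br c y)) ((f^(n:ℤ)) y) ≤ ξ₀/4 := by
        simpa [dist_comm] using hWs n
      linarith
    · obtain ⟨n, rfl⟩ : ∃ n : ℕ, -(n:ℤ) = i :=
        ⟨(-i).toNat, by rw [Int.toNat_of_nonneg (by omega)]; omega⟩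
      calc dist ((f^(-(n:ℤ))) (br c y)) ((f^(-(n:ℤ))) y)
          ≤ dist ((f^(-(n:ℤ))) (br c y)) ((f^(-(n:ℤ))) c)
            + dist ((f^(-(n:ℤ))) c) ((f^(-(n:ℤ))) y) := dist_triangle _ _ _
        _ ≤ ξ₀/4 + ξ₀/4 :=
            add_le_add (by simpa [dist_comm] using hWu n)
              (le_trans (hdCu c hc y hy.2 n) hξ4)
        _ = ξ₀/2 := by ring
  -- D := br x '' Cs is a connected set with small orbits
  have hDconn : IsConnected ((fun c => br x c) '' Cs) := by
    refine hCs.image _ ?_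
    have : ContinuousOn ((fun pq : M × M => br pq.1 pq.2) ∘ (fun c => (x, c))) Cs := by
      refine hcont.comp (Continuous.continuousOn (by fun_prop)) ?_
      intro c hc
      simp only [Set.mem_setOf_eq]
      exact le_trans (le_trans (by simpa using hdCs x hx.1 c hc 0) hξγ) hγδ
    exact this
  have hDdiam : ∀ i : ℤ, Metric.diam ((f^i) '' ((fun c => br x c) '' Cs)) ≤ ξ₀ := by
    intro i
    apply Metric.diam_le_of_forall_dist_le hξ₀.le
    rintro z ⟨_, ⟨c, hc, rfl⟩, rfl⟩ w ⟨_, ⟨c', hc', rfl⟩, rfl⟩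
    calc dist ((f^i) (br x c)) ((f^i) (br x c'))
        ≤ dist ((f^i) (br x c)) ((f^i) x) + dist ((f^i) x) ((f^i) (br x c')) :=
          dist_triangle _ _ _
      _ ≤ ξ₀/2 + ξ₀/2 := add_le_add (hD c hc i) (by simpa [dist_comm] using hD c' hc' i)
      _ = ξ₀ := by ring
  have h1 : br x y = x :=
    hcw _ hDconn hDdiam ⟨y, hy.1, rfl⟩ ⟨x, hx.1, hdiag x⟩
  -- E := (· y) ∘ br '' Cu is a connected set with small orbits
  have hEconn : IsConnected ((fun c => br c y) '' Cu) := by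
    refine hCu.image _ ?_
    have : ContinuousOn ((fun pq : M × M => br pq.1 pq.2) ∘ (fun c => (c, y))) Cu := by
      refine hcont.comp (Continuous.continuousOn (by fun_prop)) ?_
      intro c hc
      simp only [Set.mem_setOf_eq]
      exact le_trans (le_trans (by simpa using hdCu c hc y hy.2 0) hξγ) hγδ
    exact this
  have hEdiam : ∀ i : ℤ, Metric.diam ((f^i) '' ((fun c => br c y) '' Cu)) ≤ ξ₀ := by
    intro i
    apply Metric.diam_le_of_forall_dist_le hξ₀.le
    rintro z ⟨_, ⟨c, hc, rfl⟩, rfl⟩ w ⟨_, ⟨c', hc', rfl⟩, rfl⟩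
    calc dist ((f^i) (br c y)) ((f^i) (br c' y))
        ≤ dist ((f^i) (br c y)) ((f^i) y) + dist ((f^i) y) ((f^i) (br c' y)) :=
          dist_triangle _ _ _
      _ ≤ ξ₀/2 + ξ₀/2 := add_le_add (hE c hc i) (by simpa [dist_comm] using hE c' hc' i)
      _ = ξ₀ := by ring
  have h2 : br x y = y :=
    hcw _ hEconn hEdiam ⟨x, hx.2, rfl⟩ ⟨y, hy.2, hdiag y⟩
  rw [← h1, h2]
end

section
/- Every L-shadowing map is a shadowing map. -/
open Filter Metric Topology

variable {M : Type*}

section MyHelpers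

variable {M : Type*}

lemma permZpowAddApply (f : Equiv.Perm M) (a b : ℤ) (p : M) :
    (f ^ (a + b)) p = (f ^ a) ((f ^ b) p) := by
  rw [zpow_add, Equiv.Perm.mul_apply]

lemma permZpowSuccApply (f : Equiv.Perm M) (a : ℤ) (p : M) :
    (f ^ (a + 1)) p = f ((f ^ a) p) := by
  rw [add_comm, permZpowAddApply, zpow_one]

lemma contZpow [TopologicalSpace M] (f : Equiv.Perm M) (hf : Continuous ⇑f)
    (hf' : Continuous ⇑f.symm) (i : ℤ) : Continuous ⇑(f ^ i) := by
  induction i using Int.induction_on with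
  | zero => simpa using continuous_id
  | succ n ih =>
      have h : ⇑(f ^ ((n : ℤ) + 1)) = ⇑f ∘ ⇑(f ^ (n : ℤ)) := by
        funext p; exact permZpowSuccApply f n p
      rw [h]; exact hf.comp ih
  | pred n ih =>
      have h : ⇑(f ^ (-(n : ℤ) - 1)) = ⇑f.symm ∘ ⇑(f ^ (-(n : ℤ))) := by
        funext p
        have h2 : (-(n : ℤ) - 1) = (-1) + (-(n : ℤ)) := by ring
        rw [h2, permZpowAddApply, zpow_neg_one]
        rfl
      rw [h]; exact hf'.comp ih

/-- Truncation of a pseudo-orbit: agrees with `x` on `[-n, n]`, continues by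
true orbits outside. -/
def trunc (f : Equiv.Perm M) (n : ℕ) (x : ℤ → M) : ℤ → M := fun j =>
  if (n : ℤ) < j then (f ^ (j - n)) (x n)
  else if j < -(n : ℤ) then (f ^ (j + n)) (x (-(n : ℤ)))
  else x j

lemma trunc_eq [MetricSpace M] (f : Equiv.Perm M) (n : ℕ) (x : ℤ → M) (j : ℤ)
    (h : |j| ≤ (n : ℤ)) : trunc f n x j = x j := by
  have h1 : ¬((n : ℤ) < j) := not_lt.2 (abs_le.1 h).2
  have h2 : ¬(j < -(n : ℤ)) := not_lt.2 (abs_le.1 h).1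
  simp [trunc, h1, h2]

lemma trunc_exact (f : Equiv.Perm M) (n : ℕ) (x : ℤ → M) (i : ℤ)
    (h : (n : ℤ) ≤ i ∨ i < -(n : ℤ)) : trunc f n x (i + 1) = f (trunc f n x i) := by
  rcases h with h | h
  · have hi1 : (n : ℤ) < i + 1 := by omega
    rcases eq_or_lt_of_le h with h' | h'
    · have hni : ¬((n : ℤ) < i) := by omega
      have hni2 : ¬(i < -(n : ℤ)) := by omega
      simp only [trunc, if_pos hi1, if_neg hni, if_neg hni2]
      have : i + 1 - n = 1 := by omega
      rw [this, zpow_one, ← h']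
    · simp only [trunc, if_pos hi1, if_pos h']
      have : i + 1 - n = (i - n) + 1 := by ring
      rw [this, permZpowSuccApply]
  · have hn1 : ¬((n : ℤ) < i + 1) := by omega
    have hn2 : ¬((n : ℤ) < i) := by omega
    rcases eq_or_lt_of_le (by omega : i + 1 ≤ -(n : ℤ)) with h' | h'
    · have hn3 : ¬(i + 1 < -(n : ℤ)) := by omega
      simp only [trunc, if_neg hn1, if_neg hn3, if_pos h, if_neg hn2]
      have h4 : (i + n) + 1 = 0 := by omega
      have := permZpowSuccApply f (i + n) (x (-(n : ℤ)))
      rw [h4, zpow_zero, Equiv.Perm.one_apply] at this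
      rw [← this, ← h']
    · simp only [trunc, if_neg hn1, if_pos h', if_neg hn2, if_pos h]
      have : i + 1 + n = (i + n) + 1 := by ring
      rw [this, permZpowSuccApply]

lemma trunc_pseudo [MetricSpace M] (f : Equiv.Perm M) (n : ℕ) (x : ℤ → M) (γ : ℝ)
    (hγ : 0 ≤ γ) (hx : IsPseudoOrbit (⇑f) γ x) : IsPseudoOrbit (⇑f) γ (trunc f n x) := by
  intro i
  by_cases h : (n : ℤ) ≤ i ∨ i < -(n : ℤ)
  · rw [trunc_exact f n x i h, dist_self]; exact hγ
  · push_neg at h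
    rw [trunc_eq f n x i (abs_le.2 ⟨h.2, by omega⟩),
      trunc_eq f n x (i + 1) (abs_le.2 ⟨by omega, by omega⟩)]
    exact hx i

lemma trunc_tsl [MetricSpace M] (f : Equiv.Perm M) (n : ℕ) (x : ℤ → M) :
    TwoSidedLimit (⇑f) (trunc f n x) := by
  have h : ∀ᶠ i in cofinite, dist (f (trunc f n x i)) (trunc f n x (i + 1)) = 0 := by
    rw [Filter.eventually_cofinite]
    apply Set.Finite.subset (Set.finite_Icc (-(n : ℤ)) (n : ℤ))
    intro i hi
    by_contra hmem
    apply hi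
    have : (n : ℤ) ≤ i ∨ i < -(n : ℤ)  := by
      rw [Set.mem_Icc] at hmem; omega
    rw [trunc_exact f n x i this, dist_self]
  exact Tendsto.congr' (by filter_upwards [h] with i hi using hi.symm) tendsto_const_nhds

lemma shiftIter_pseudo [MetricSpace M] (f : Equiv.Perm M) (γ : ℝ) (i : ℤ) (x : ℤ → M)
    (hx : IsPseudoOrbit (⇑f) γ x) : IsPseudoOrbit (⇑f) γ (shiftIter i x) := by
  intro j
  have := hx (j + i)
  simpa [shiftIter, add_right_comm] using this

lemma shiftIter_tsl [MetricSpace M] (f : Equiv.Perm M) (i : ℤ) (x : ℤ → M)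
    (hx : TwoSidedLimit (⇑f) x) : TwoSidedLimit (⇑f) (shiftIter i x) := by
  have hinj : Function.Injective (fun j : ℤ => j + i) := fun a b h => by
    simpa using h
  have h := hx.comp hinj.tendsto_cofinite
  apply h.congr
  intro j
  simp [shiftIter, add_right_comm]

end MyHelpers

/-- Proposition 4.6: every L-shadowing map is a shadowing map. -/
theorem stmt6 {M : Type*} [MetricSpace M] [CompactSpace M]
    (f : Equiv.Perm M) (hf : Continuous (⇑f)) (hf' : Continuous (⇑f.symm))
    (δ : ℝ) (Sh : (ℤ → M) → M) (hL : IsLShadowingMap f δ Sh) :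
    IsShadowingMap f δ Sh := by
  obtain ⟨hPo, hLc⟩ := hL
  refine ⟨hPo, ?_⟩
  intro ε hε
  obtain ⟨γ, hγ0, hγδ, hγ⟩ := hLc (ε / 2) (by linarith)
  refine ⟨γ, hγ0, hγδ, ?_⟩
  intro x hx i
  set y : ℕ → ℤ → M := fun n => trunc f n x with hy
  have hymem : ∀ n, y n ∈ PseudoOrbits (⇑f) γ := fun n =>
    trunc_pseudo f n x γ hγ0.le hx
  have hymemδ : ∀ n, y n ∈ PseudoOrbits (⇑f) δ := fun n j => (hymem n j).trans hγδ
  have hytsl : ∀ n, TwoSidedLimit (⇑f) (y n) := fun n => trunc_tsl f n x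
  have hsmem : ∀ n, shiftIter i (y n) ∈ PseudoOrbits (⇑f) γ := fun n =>
    shiftIter_pseudo f γ i (y n) (hymem n)
  have hsmemδ : ∀ n, shiftIter i (y n) ∈ PseudoOrbits (⇑f) δ := fun n j =>
    (hsmem n j).trans hγδ
  have hstsl : ∀ n, TwoSidedLimit (⇑f) (shiftIter i (y n)) := fun n =>
    shiftIter_tsl f i (y n) (hytsl n)
  have hbound : ∀ n, dist ((f ^ i) (Sh (y n))) (Sh (shiftIter i (y n))) ≤ ε := by
    intro n
    have h1 := (hγ (y n) (hymem n) (hytsl n)).1 i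
    have h2 := (hγ _ (hsmem n) (hstsl n)).1 0
    simp only [zpow_zero, Equiv.Perm.coe_one, id_eq, shiftIter, zero_add] at h2
    calc dist ((f ^ i) (Sh (y n))) (Sh (shiftIter i (y n)))
        ≤ dist ((f ^ i) (Sh (y n))) (y n i) + dist (y n i) (Sh (shiftIter i (y n))) :=
          dist_triangle _ _ _
      _ ≤ ε / 2 + ε / 2 := add_le_add h1 (by rw [dist_comm]; exact h2)
      _ = ε := by ring
  have hxδ : x ∈ PseudoOrbits (⇑f) δ := fun j => (hx j).trans hγδ
  have hcoord : ∀ j : ℤ, Tendsto (fun n : ℕ => y n j) atTop (𝓝 (x j)) := by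
    intro j
    have hev : ∀ᶠ n in atTop, y n j = x j := by
      rw [eventually_atTop]
      refine ⟨j.natAbs, fun n hn => trunc_eq f n x j ?_⟩
      rw [Int.abs_eq_natAbs]
      exact_mod_cast hn
    exact Tendsto.congr' (by filter_upwards [hev] with n hn using hn.symm)
      tendsto_const_nhds
  have hyx : Tendsto y atTop (𝓝[PseudoOrbits (⇑f) δ] x) :=
    tendsto_nhdsWithin_iff.mpr ⟨tendsto_pi_nhds.mpr hcoord, Eventually.of_forall hymemδ⟩
  have hsyx : Tendsto (fun n => shiftIter i (y n)) atTop
      (𝓝[PseudoOrbits (⇑f) δ] (shiftIter i x)) := by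
    refine tendsto_nhdsWithin_iff.mpr ⟨tendsto_pi_nhds.mpr fun j => ?_,
      Eventually.of_forall hsmemδ⟩
    exact hcoord (j + i)
  have h1 : Tendsto (fun n => Sh (y n)) atTop (𝓝 (Sh x)) :=
    ((hPo.2.1 x hxδ).tendsto).comp hyx
  have h2 : Tendsto (fun n => Sh (shiftIter i (y n))) atTop (𝓝 (Sh (shiftIter i x))) :=
    ((hPo.2.1 (shiftIter i x) (shiftIter_pseudo f δ i x hxδ)).tendsto).comp hsyx
  have hfin : Tendsto (fun n => dist ((f ^ i) (Sh (y n))) (Sh (shiftIter i (y n))))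
      atTop (𝓝 (dist ((f ^ i) (Sh x)) (Sh (shiftIter i x)))) :=
    Tendsto.dist (((contZpow f hf hf' i).tendsto _).comp h1) h2
  exact le_of_tendsto hfin (Eventually.of_forall hbound)
end

section
/- If Sh_f : M̃(f,δ) → M is an L-shadowing map, then the induced bracket [p,q] = Sh_f(con_f(p,q)), defined for (p,q) ∈ Δ_δ, is an L-bracket. -/
open Filter Metric Topology

variable {M : Type*}

lemma perm_zpow_succ_apply (f : Equiv.Perm M) (i : ℤ) (p : M) :
    f ((f ^ i) p) = (f ^ (i + 1)) p := by
  rw [add_comm, zpow_add, zpow_one, Equiv.Perm.mul_apply]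

lemma perm_zpow_pred_apply (f : Equiv.Perm M) (i : ℤ) (p : M) :
    f.symm ((f ^ i) p) = (f ^ (i - 1)) p := by
  have := perm_zpow_succ_apply f (i - 1) p
  rw [sub_add_cancel] at this
  rw [← this, Equiv.symm_apply_apply]

lemma continuous_perm_zpow [MetricSpace M] (f : Equiv.Perm M)
    (hf : Continuous (⇑f)) (hf' : Continuous (⇑f.symm)) (i : ℤ) :
    Continuous ⇑(f ^ i) := by
  induction i using Int.induction_on with
  | zero => simpa using continuous_id
  | succ n ih =>
      have : ⇑(f ^ ((n : ℤ) + 1)) = ⇑f ∘ ⇑(f ^ (n : ℤ)) := by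
        funext p; exact (perm_zpow_succ_apply f n p).symm
      rw [this]; exact hf.comp ih
  | pred n ih =>
      have : ⇑(f ^ (-(n : ℤ) - 1)) = ⇑f.symm ∘ ⇑(f ^ (-(n : ℤ))) := by
        funext p; exact (perm_zpow_pred_apply f _ p).symm
      rw [this]; exact hf'.comp ih

lemma connMap_mem_pseudoOrbits [MetricSpace M] (f : Equiv.Perm M) {p q : M} {γ : ℝ}
    (hγ : 0 ≤ γ) (h : dist p q ≤ γ) : connMap f p q ∈ PseudoOrbits (⇑f) γ := by
  intro i
  unfold connMap
  rcases lt_trichotomy i (-1) with hi | hi | hi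
  · have h1 : i + 1 < 0 := by omega
    have h2 : i < 0 := by omega
    simp only [if_pos h1, if_pos h2, perm_zpow_succ_apply, dist_self]
    exact hγ
  · subst hi
    norm_num [perm_zpow_succ_apply]
    simpa [dist_comm] using h
  · have h1 : ¬ i + 1 < 0 := by omega
    have h2 : ¬ i < 0 := by omega
    simp only [if_neg h1, if_neg h2, perm_zpow_succ_apply, dist_self]
    exact hγ

lemma connMap_twoSidedLimit [MetricSpace M] (f : Equiv.Perm M) (p q : M) :
    TwoSidedLimit (⇑f) (connMap f p q) := by
  have h : ∀ᶠ i : ℤ in cofinite,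
      dist (f (connMap f p q i)) (connMap f p q (i + 1)) = 0 := by
    rw [eventually_cofinite]
    apply Set.Finite.subset (Set.finite_singleton (-1 : ℤ))
    intro i hi
    simp only [Set.mem_setOf_eq] at hi
    by_contra hne
    apply hi
    unfold connMap
    rcases lt_trichotomy i (-1) with h1 | h1 | h1
    · have : i + 1 < 0 := by omega
      simp [if_pos (show i < 0 by omega), if_pos this, perm_zpow_succ_apply]
    · exact absurd h1 (by simpa using hne)
    · have : ¬ i + 1 < 0 := by omega
      simp [if_neg (show ¬ i < 0 by omega), if_neg this, perm_zpow_succ_apply]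
  exact tendsto_const_nhds.congr' (h.mono fun i hi => hi.symm)

/-- Proposition 4.10: the bracket induced by an L-shadowing map,
`[p,q] = Sh_f(con_f(p,q))` on `Δ_δ`, is an L-bracket. -/
theorem stmt7 {M : Type*} [MetricSpace M] [CompactSpace M]
    (f : Equiv.Perm M) (hf : Continuous (⇑f)) (hf' : Continuous (⇑f.symm))
    (δ : ℝ) (Sh : (ℤ → M) → M) (hL : IsLShadowingMap f δ Sh) :
    IsLBracket f δ (fun p q => Sh (connMap f p q)) := by
  obtain ⟨⟨hδ, hcont, horb⟩, hcond⟩ := hL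
  refine ⟨hδ, ?_, ?_, ?_⟩
  · -- continuity
    have hg : Continuous (fun pq : M × M => connMap f pq.1 pq.2) := by
      apply continuous_pi
      intro i
      unfold connMap
      by_cases hi : i < 0
      · simp only [if_pos hi]
        exact (continuous_perm_zpow f hf hf' i).comp continuous_fst
      · simp only [if_neg hi]
        exact (continuous_perm_zpow f hf hf' i).comp continuous_snd
    exact hcont.comp hg.continuousOn fun pq h =>
      connMap_mem_pseudoOrbits f hδ.le h
  · -- br p p = p
    intro p
    have : connMap f p p = orbitMap f p := by
      funext i; unfold connMap orbitMap; split_ifs <;> rfl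
    show Sh (connMap f p p) = p
    rw [this]; exact horb p
  · -- main condition
    intro ε hε
    obtain ⟨γ, hγ0, hγδ, hγ⟩ := hcond (ε / 2) (by linarith)
    refine ⟨min γ (ε / 2), lt_min hγ0 (by linarith), (min_le_left _ _).trans hγδ, ?_⟩
    intro p q hpq
    have hx : connMap f p q ∈ PseudoOrbits (⇑f) γ :=
      connMap_mem_pseudoOrbits f hγ0.le (hpq.trans (min_le_left _ _))
    obtain ⟨hbd, hlim⟩ := hγ _ hx (connMap_twoSidedLimit f p q)
    have hxpos : ∀ n : ℕ, connMap f p q (n : ℤ) = (f ^ (n : ℤ)) q := by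
      intro n; unfold connMap; rw [if_neg (by omega)]
    have hxneg : ∀ n : ℕ, 1 ≤ n → connMap f p q (-(n : ℤ)) = (f ^ (-(n : ℤ))) p := by
      intro n hn; unfold connMap; rw [if_pos (by omega)]
    refine ⟨⟨?_, ?_⟩, ?_, ?_⟩
    · -- Ws f ε q
      intro n
      have := hbd (n : ℤ)
      rw [hxpos n] at this
      rw [dist_comm]
      linarith
    · -- WsLim f q
      have hcast : Tendsto (fun n : ℕ => (n : ℤ)) atTop cofinite := by
        rw [← Nat.cofinite_eq_atTop]
        exact Function.Injective.tendsto_cofinite fun a b h => by exact_mod_cast h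
      have := hlim.comp hcast
      refine this.congr fun n => ?_
      simp only [Function.comp_apply, hxpos n, dist_comm]
    · -- Wu f ε p
      intro n
      rcases Nat.eq_zero_or_pos n with hn | hn
      · subst hn
        simp only [Nat.cast_zero, neg_zero, zpow_zero, Equiv.Perm.coe_one, id_eq]
        have h0 := hbd 0
        have : connMap f p q 0 = q := by unfold connMap; simp
        rw [this] at h0
        calc dist p (Sh (connMap f p q)) ≤ dist p q + dist q (Sh (connMap f p q)) :=
              dist_triangle _ _ _
          _ ≤ ε / 2 + ε / 2 := by
              refine add_le_add (hpq.trans (min_le_right _ _)) ?_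
              rw [dist_comm]; exact h0
          _ = ε := by ring
      · have := hbd (-(n : ℤ))
        rw [hxneg n hn] at this
        rw [dist_comm]
        linarith
    · -- WuLim f p
      have hcast : Tendsto (fun n : ℕ => -(n : ℤ)) atTop cofinite := by
        rw [← Nat.cofinite_eq_atTop]
        exact Function.Injective.tendsto_cofinite fun a b h => by
          simpa using h
      have h := hlim.comp hcast
      refine h.congr' ?_
      filter_upwards [eventually_ge_atTop 1] with n hn
      simp only [Function.comp_apply, hxneg n hn, dist_comm]
end

section
/- If M has infinitely many points and f has h-shadowing, then f does not have the L-shadowing property. -/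
open Filter Metric Topology

variable {M : Type*}

/-- h-shadowing: every `δ`-pseudo-orbit is `ε`-shadowed by its own `0`-th coordinate. -/
def HShadowing {M : Type*} [MetricSpace M] (f : Equiv.Perm M) : Prop :=
  ∀ ε > (0:ℝ), ∃ δ > (0:ℝ), ∀ x ∈ PseudoOrbits (⇑f) δ,
    ∀ i : ℤ, dist ((f ^ i) (x 0)) (x i) ≤ ε

/-- The L-shadowing property. -/
def LShadowingProperty {M : Type*} [MetricSpace M] (f : Equiv.Perm M) : Prop :=
  ∀ ε > (0:ℝ), ∃ δ > (0:ℝ), ∀ x ∈ PseudoOrbits (⇑f) δ, TwoSidedLimit (⇑f) x →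
    ∃ p : M, (∀ i : ℤ, dist ((f ^ i) p) (x i) ≤ ε) ∧
      Filter.Tendsto (fun i : ℤ => dist ((f ^ i) p) (x i)) Filter.cofinite (nhds 0)

private lemma fpow_succ' {M : Type*} (f : Equiv.Perm M) (i : ℤ) (a : M) :
    f ((f ^ i) a) = (f ^ (i + 1)) a := by
  rw [add_comm i 1, zpow_add, zpow_one, Equiv.Perm.mul_apply]

private lemma fpow_cancel {M : Type*} (f : Equiv.Perm M) (i : ℤ) (a : M) :
    (f ^ (-i)) ((f ^ i) a) = a := by
  rw [zpow_neg]; exact Equiv.symm_apply_apply _ _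

/-- h-shadowing implies uniform equicontinuity of the full family `f^i`, `i ∈ ℤ`. -/
private lemma equi_of_hH {M : Type*} [MetricSpace M] [CompactSpace M]
    (f : Equiv.Perm M) (hf : Continuous (⇑f)) (hH : HShadowing f) :
    ∀ ε > (0:ℝ), ∃ δ > (0:ℝ), ∀ p q : M, dist p q ≤ δ →
      ∀ i : ℤ, dist ((f ^ i) p) ((f ^ i) q) ≤ ε := by
  intro ε hε
  obtain ⟨δ, hδ, hsh⟩ := hH ε hε
  obtain ⟨δ₁, hδ₁, hu⟩ := Metric.uniformContinuous_iff.mp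
    (CompactSpace.uniformContinuous_of_continuous hf) δ hδ
  refine ⟨min (δ₁/2) (min δ ε), by positivity, ?_⟩
  intro p q hpq i
  have hpq1 : dist p q < δ₁ :=
    lt_of_le_of_lt (hpq.trans (min_le_left _ _)) (by linarith)
  have hpqδ : dist p q ≤ δ := hpq.trans ((min_le_right _ _).trans (min_le_left _ _))
  have hpqε : dist p q ≤ ε := hpq.trans ((min_le_right _ _).trans (min_le_right _ _))
  rcases lt_trichotomy i 0 with h | h | h
  · -- use the pseudo-orbit which is the orbit of q in the past, orbit of p in the future
    set x : ℤ → M := fun j => if j < 0 then (f ^ j) q else (f ^ j) p with hx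
    have hmem : x ∈ PseudoOrbits (⇑f) δ := by
      intro j
      by_cases h1 : j + 1 < 0
      · have h0 : j < 0 := by omega
        simp only [hx, if_pos h1, if_pos h0, fpow_succ', dist_self]
        exact hδ.le
      · by_cases h0 : j < 0
        · have hj : j = -1 := by omega
          subst hj
          simp only [hx, if_neg h1, if_pos h0, fpow_succ']
          norm_num
          exact hpqδ
        · have h0' : ¬ (j + 1 < 0) := h1
          simp only [hx, if_neg h1, if_neg h0, fpow_succ', dist_self]
          exact hδ.le
    have h0 : x 0 = p := by simp [hx]
    have := hsh x hmem i
    rw [h0] at this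
    simpa only [hx, if_pos h] using this
  · subst h; simpa using hpqε
  · -- use the pseudo-orbit which is the orbit of p in the past, orbit of q in the future
    set x : ℤ → M := fun j => if j ≤ 0 then (f ^ j) p else (f ^ j) q with hx
    have hmem : x ∈ PseudoOrbits (⇑f) δ := by
      intro j
      by_cases h1 : j + 1 ≤ 0
      · have h0 : j ≤ 0 := by omega
        simp only [hx, if_pos h1, if_pos h0, fpow_succ', dist_self]
        exact hδ.le
      · by_cases h0 : j ≤ 0
        · have hj : j = 0 := by omega
          subst hj
          simp only [hx, if_neg h1, if_pos h0]
          norm_num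
          calc dist (f q) (f p) = dist (f p) (f q) := dist_comm _ _
            _ ≤ δ := (hu hpq1).le
        · simp only [hx, if_neg h1, if_neg h0, fpow_succ', dist_self]
          exact hδ.le
    have h0 : x 0 = p := by simp [hx]
    have := hsh x hmem i
    rw [h0] at this
    have hni : ¬ i ≤ 0 := not_le.mpr h
    simpa only [hx, if_neg hni] using this

/-- Proposition 4.11: if `M` has infinitely many points and `f` has
h-shadowing, then `f` does not have the L-shadowing property. -/
theorem stmt8 {M : Type*} [MetricSpace M] [CompactSpace M] [Infinite M]
    (f : Equiv.Perm M) (hf : Continuous (⇑f)) (hf' : Continuous (⇑f.symm))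
    (hH : HShadowing f) :
    ¬ LShadowingProperty f := by
  intro hL
  obtain ⟨δ₀, hδ₀, hLsh⟩ := hL 1 one_pos
  -- key claim: any two δ₀-close points coincide
  have key : ∀ p q : M, dist p q ≤ δ₀ → p = q := by
    intro p q hpq
    set x : ℤ → M := fun j => if j < 0 then (f ^ j) p else (f ^ j) q with hx
    have hmem : x ∈ PseudoOrbits (⇑f) δ₀ := by
      intro j
      by_cases h1 : j + 1 < 0
      · have h0 : j < 0 := by omega
        simp only [hx, if_pos h1, if_pos h0, fpow_succ', dist_self]
        exact hδ₀.le
      · by_cases h0 : j < 0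
        · have hj : j = -1 := by omega
          subst hj
          simp only [hx, if_neg h1, if_pos h0, fpow_succ']
          norm_num
          rw [dist_comm]; exact hpq
        · simp only [hx, if_neg h1, if_neg h0, fpow_succ', dist_self]
          exact hδ₀.le
    have hlim : TwoSidedLimit (⇑f) x := by
      have heq : (fun i : ℤ => dist (f (x i)) (x (i + 1))) =ᶠ[cofinite] fun _ => 0 := by
        filter_upwards [eventually_cofinite_ne (-1 : ℤ)] with i hi
        by_cases h0 : i < 0
        · have h1 : i + 1 < 0 := by omega
          simp only [hx, if_pos h0, if_pos h1, fpow_succ', dist_self]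
        · have h1 : ¬ (i + 1 < 0) := by omega
          simp only [hx, if_neg h0, if_neg h1, fpow_succ', dist_self]
      exact Tendsto.congr' heq.symm tendsto_const_nhds
    obtain ⟨z, _, htend⟩ := hLsh x hmem hlim
    -- z = q using forward times
    have hzq : z = q := by
      rw [← dist_le_zero]
      refine le_of_forall_pos_le_add ?_
      intro ε' hε'
      obtain ⟨δ₁, hδ₁, hequi⟩ := equi_of_hH f hf hH ε' hε'
      have hev : ∀ᶠ i in cofinite, dist ((f ^ i) z) (x i) < δ₁ :=
        htend (Iio_mem_nhds hδ₁)
      have hfreq : ∃ᶠ i in (cofinite : Filter ℤ), (0:ℤ) ≤ i := by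
        rw [Filter.frequently_cofinite_iff_infinite]
        exact Set.Ici_infinite 0
      obtain ⟨i, hi0, hid⟩ := (hfreq.and_eventually hev).exists
      have hxi : x i = (f ^ i) q := by simp [hx, not_lt.mpr hi0]
      rw [hxi] at hid
      have := hequi ((f ^ i) z) ((f ^ i) q) hid.le (-i)
      rw [fpow_cancel, fpow_cancel] at this
      linarith
    -- z = p using backward times
    have hzp : z = p := by
      rw [← dist_le_zero]
      refine le_of_forall_pos_le_add ?_
      intro ε' hε'
      obtain ⟨δ₁, hδ₁, hequi⟩ := equi_of_hH f hf hH ε' hε'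
      have hev : ∀ᶠ i in cofinite, dist ((f ^ i) z) (x i) < δ₁ :=
        htend (Iio_mem_nhds hδ₁)
      have hfreq : ∃ᶠ i in (cofinite : Filter ℤ), i < 0 := by
        rw [Filter.frequently_cofinite_iff_infinite]
        exact Set.Iio_infinite 0
      obtain ⟨i, hi0, hid⟩ := (hfreq.and_eventually hev).exists
      have hxi : x i = (f ^ i) p := by simp [hx, hi0]
      rw [hxi] at hid
      have := hequi ((f ^ i) z) ((f ^ i) p) hid.le (-i)
      rw [fpow_cancel, fpow_cancel] at this
      linarith
    rw [← hzp, hzq]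
  -- hence M is discrete, so finite by compactness, contradicting Infinite
  have hdisc : DiscreteTopology M := by
    rw [discreteTopology_iff_isOpen_singleton]
    intro a
    have : {a} = Metric.ball a δ₀ := by
      ext b
      simp only [Set.mem_singleton_iff, Metric.mem_ball]
      constructor
      · rintro rfl; simpa using hδ₀
      · intro hb; exact ((key b a hb.le)).symm ▸ rfl
    rw [this]
    exact Metric.isOpen_ball
  haveI : Finite M := finite_of_compact_of_discrete
  exact not_finite M
end

section
/- Every self-tuning pseudo-orbit map is an L-shadowing map. -/
open Filter Metric Topology

variable {M : Type*}

section Stmt9Aux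

variable {M : Type*} [MetricSpace M] [CompactSpace M]

private lemma st9_summable_base : Summable (fun j : ℤ => (2:ℝ) ^ (-|j|)) := by
  apply Summable.of_nat_of_neg
  · have h : (fun n : ℕ => (2:ℝ) ^ (-|(n:ℤ)|)) = fun n : ℕ => (2⁻¹ : ℝ) ^ n := by
      funext n
      rw [Int.abs_natCast, zpow_neg, zpow_natCast, inv_pow]
    rw [h]
    exact summable_geometric_of_lt_one (by norm_num) (by norm_num)
  · have h : (fun n : ℕ => (2:ℝ) ^ (-|(-(n:ℤ))|)) = fun n : ℕ => (2⁻¹ : ℝ) ^ n := by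
      funext n
      rw [abs_neg, Int.abs_natCast, zpow_neg, zpow_natCast, inv_pow]
    rw [h]
    exact summable_geometric_of_lt_one (by norm_num) (by norm_num)

private lemma st9_bound : ∃ D : ℝ, 0 ≤ D ∧ ∀ p q : M, dist p q ≤ D := by
  obtain ⟨C, hC⟩ := Metric.isBounded_iff.mp (isCompact_univ : IsCompact (Set.univ : Set M)).isBounded
  exact ⟨max C 0, le_max_right _ _,
    fun p q => le_trans (hC (Set.mem_univ p) (Set.mem_univ q)) (le_max_left _ _)⟩

private lemma st9_summable_dtilde (x y : ℤ → M) :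
    Summable (fun j : ℤ => (2:ℝ) ^ (-|j|) * dist (x j) (y j)) := by
  obtain ⟨D, hD0, hD⟩ := st9_bound (M := M)
  exact Summable.of_nonneg_of_le (fun j => mul_nonneg (by positivity) dist_nonneg)
    (fun j => mul_le_mul_of_nonneg_left (hD _ _) (by positivity))
    (st9_summable_base.mul_right D)

private lemma st9_dtilde_nonneg (x y : ℤ → M) : 0 ≤ dtilde x y :=
  tsum_nonneg fun j => mul_nonneg (by positivity) dist_nonneg

private lemma st9_coord (x y : ℤ → M) (j : ℤ) :
    (2:ℝ) ^ (-|j|) * dist (x j) (y j) ≤ dtilde x y :=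
  Summable.le_tsum (st9_summable_dtilde x y) j (fun _ _ => mul_nonneg (by positivity) dist_nonneg)

private lemma st9_cont_zpow (f : Equiv.Perm M) (hf : Continuous (⇑f))
    (hf' : Continuous (⇑f.symm)) (j : ℤ) : Continuous ⇑(f ^ j) := by
  rcases j with n | n
  · rw [Int.ofNat_eq_coe, zpow_natCast, Equiv.Perm.coe_pow]
    exact hf.iterate n
  · rw [zpow_negSucc, ← inv_pow, Equiv.Perm.inv_def, Equiv.Perm.coe_pow]
    exact hf'.iterate _

private lemma st9_zpow_succ (f : Equiv.Perm M) (j : ℤ) (p : M) :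
    (f ^ (j + 1)) p = f ((f ^ j) p) := by
  rw [add_comm, zpow_add, zpow_one, Equiv.Perm.mul_apply]

private lemma st9_zpow_pred (f : Equiv.Perm M) (j : ℤ) (p : M) :
    (f ^ (j - 1)) p = f.symm ((f ^ j) p) := by
  have h : j - 1 = -1 + j := by ring
  rw [h, zpow_add, zpow_neg_one, Equiv.Perm.mul_apply, Equiv.Perm.inv_def]

private lemma st9_orbit_mem (f : Equiv.Perm M) {δ' : ℝ} (hδ : 0 ≤ δ') (p : M) :
    orbitMap f p ∈ PseudoOrbits (⇑f) δ' := by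
  intro i
  show dist ((f ^ (i + 1)) p) (f ((f ^ i) p)) ≤ δ'
  rw [st9_zpow_succ, dist_self]
  exact hδ

private lemma st9_shift_mem {f : Equiv.Perm M} {δ' : ℝ} {x : ℤ → M}
    (hx : x ∈ PseudoOrbits (⇑f) δ') (i : ℤ) : shiftIter i x ∈ PseudoOrbits (⇑f) δ' := by
  intro j
  show dist (x (j + 1 + i)) (f (x (j + i))) ≤ δ'
  have e : j + 1 + i = j + i + 1 := by ring
  rw [e]
  exact hx (j + i)

private lemma st9_PO_mono {f : Equiv.Perm M} {γ δ' : ℝ} (h : γ ≤ δ') :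
    PseudoOrbits (⇑f) γ ⊆ PseudoOrbits (⇑f) δ' :=
  fun _ hx i => (hx i).trans h

private lemma st9_uc (g : M → M) (hg : Continuous g) :
    ∀ η > (0:ℝ), ∃ ρ > (0:ℝ), ∀ a b : M, dist a b ≤ ρ → dist (g a) (g b) ≤ η := by
  have h := Metric.uniformContinuous_iff.mp (CompactSpace.uniformContinuous_of_continuous hg)
  intro η hη
  obtain ⟨ρ, hρ, hr⟩ := h η hη
  exact ⟨ρ / 2, by positivity, fun a b hab => (hr (lt_of_le_of_lt hab (by linarith))).le⟩

private lemma st9_chain_pos (f : Equiv.Perm M) (hf : Continuous (⇑f)) :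
    ∀ n : ℕ, ∀ η > (0:ℝ), ∃ θ > (0:ℝ), ∀ (x : ℤ → M) (i : ℤ),
      (∀ k : ℤ, i ≤ k → k < i + (n:ℤ) → dist (x (k + 1)) (f (x k)) ≤ θ) →
      ∀ m : ℕ, m ≤ n → dist (x (i + (m:ℤ))) ((f ^ (m:ℤ)) (x i)) ≤ η := by
  intro n
  induction n with
  | zero =>
    intro η hη
    refine ⟨η, hη, fun x i _ m hm => ?_⟩
    have : m = 0 := Nat.le_zero.mp hm
    subst this
    simpa using hη.le
  | succ n ih =>
    intro η hη
    obtain ⟨ρ, hρ, hfρ⟩ := st9_uc (⇑f) hf (η / 2) (by positivity)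
    obtain ⟨θ, hθ, hchain⟩ := ih (min ρ (η / 2)) (by positivity)
    refine ⟨min θ (η / 2), by positivity, fun x i hwin m hm => ?_⟩
    have hwin' : ∀ k : ℤ, i ≤ k → k < i + (n:ℤ) → dist (x (k + 1)) (f (x k)) ≤ θ := by
      intro k h1 h2
      exact (hwin k h1 (by push_cast; omega)).trans (min_le_left _ _)
    rcases Nat.lt_or_ge m (n + 1) with hm' | hm'
    · exact le_trans (le_trans (hchain x i hwin' m (Nat.lt_succ_iff.mp hm'))
        (min_le_right _ _)) (by linarith)
    · have hm2 : m = n + 1 := le_antisymm hm hm'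
      subst hm2
      have h1 : dist (x (i + (n:ℤ))) ((f ^ (n:ℤ)) (x i)) ≤ ρ :=
        (hchain x i hwin' n le_rfl).trans (min_le_left _ _)
      have h2 : dist (x (i + (n:ℤ) + 1)) (f (x (i + (n:ℤ)))) ≤ η / 2 :=
        (hwin (i + (n:ℤ)) (by omega) (by push_cast; omega)).trans (min_le_right _ _)
      have h3 : dist (f (x (i + (n:ℤ)))) (f ((f ^ (n:ℤ)) (x i))) ≤ η / 2 := hfρ _ _ h1
      have e1 : ((n + 1 : ℕ) : ℤ) = (n:ℤ) + 1 := by push_cast; ring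
      rw [e1]
      have e2 : i + ((n:ℤ) + 1) = i + (n:ℤ) + 1 := by ring
      rw [e2, st9_zpow_succ]
      calc dist (x (i + (n:ℤ) + 1)) (f ((f ^ (n:ℤ)) (x i)))
          ≤ dist (x (i + (n:ℤ) + 1)) (f (x (i + (n:ℤ))))
            + dist (f (x (i + (n:ℤ)))) (f ((f ^ (n:ℤ)) (x i))) := dist_triangle _ _ _
        _ ≤ η / 2 + η / 2 := add_le_add h2 h3
        _ = η := by ring

private lemma st9_chain_neg (f : Equiv.Perm M) (hf' : Continuous (⇑f.symm)) :
    ∀ n : ℕ, ∀ η > (0:ℝ), ∃ θ > (0:ℝ), ∀ (x : ℤ → M) (i : ℤ),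
      (∀ k : ℤ, i - (n:ℤ) ≤ k → k < i → dist (x (k + 1)) (f (x k)) ≤ θ) →
      ∀ m : ℕ, m ≤ n → dist (x (i - (m:ℤ))) ((f ^ (-(m:ℤ))) (x i)) ≤ η := by
  intro n
  induction n with
  | zero =>
    intro η hη
    refine ⟨η, hη, fun x i _ m hm => ?_⟩
    have : m = 0 := Nat.le_zero.mp hm
    subst this
    simpa using hη.le
  | succ n ih =>
    intro η hη
    obtain ⟨ρ, hρ, hfρ⟩ := st9_uc (⇑f.symm) hf' (η / 2) (by positivity)
    obtain ⟨θ, hθ, hchain⟩ := ih (min ρ (η / 2)) (by positivity)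
    refine ⟨min θ ρ, by positivity, fun x i hwin m hm => ?_⟩
    have hwin' : ∀ k : ℤ, i - (n:ℤ) ≤ k → k < i → dist (x (k + 1)) (f (x k)) ≤ θ := by
      intro k h1 h2
      exact (hwin k (by push_cast; omega) h2).trans (min_le_left _ _)
    rcases Nat.lt_or_ge m (n + 1) with hm' | hm'
    · exact le_trans (le_trans (hchain x i hwin' m (Nat.lt_succ_iff.mp hm'))
        (min_le_right _ _)) (by linarith)
    · have hm2 : m = n + 1 := le_antisymm hm hm'
      subst hm2
      have h1 : dist (x (i - (n:ℤ))) ((f ^ (-(n:ℤ))) (x i)) ≤ ρ :=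
        (hchain x i hwin' n le_rfl).trans (min_le_left _ _)
      have h2 : dist (x (i - (n:ℤ))) (f (x (i - (n:ℤ) - 1))) ≤ ρ := by
        have := hwin (i - (n:ℤ) - 1) (by push_cast; omega) (by omega)
        have e : i - (n:ℤ) - 1 + 1 = i - (n:ℤ) := by ring
        rw [e] at this
        exact this.trans (min_le_right _ _)
      have h2' : dist (x (i - (n:ℤ) - 1)) (f.symm (x (i - (n:ℤ)))) ≤ η / 2 := by
        have := hfρ (x (i - (n:ℤ))) (f (x (i - (n:ℤ) - 1))) h2
        rw [Equiv.symm_apply_apply] at this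
        rw [dist_comm]
        exact this
      have h3 : dist (f.symm (x (i - (n:ℤ)))) (f.symm ((f ^ (-(n:ℤ))) (x i))) ≤ η / 2 :=
        hfρ _ _ h1
      have e1 : (-(↑(n + 1) : ℤ)) = -(n:ℤ) - 1 := by push_cast; ring
      have e2 : (i - (↑(n + 1) : ℤ)) = i - (n:ℤ) - 1 := by push_cast; ring
      rw [e1, e2, st9_zpow_pred]
      calc dist (x (i - (n:ℤ) - 1)) (f.symm ((f ^ (-(n:ℤ))) (x i)))
          ≤ dist (x (i - (n:ℤ) - 1)) (f.symm (x (i - (n:ℤ))))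
            + dist (f.symm (x (i - (n:ℤ)))) (f.symm ((f ^ (-(n:ℤ))) (x i))) := dist_triangle _ _ _
        _ ≤ η / 2 + η / 2 := add_le_add h2' h3
        _ = η := by ring

private lemma st9_chain (f : Equiv.Perm M) (hf : Continuous (⇑f)) (hf' : Continuous (⇑f.symm))
    (N : ℕ) : ∀ η > (0:ℝ), ∃ θ > (0:ℝ), ∀ (x : ℤ → M) (i : ℤ),
      (∀ k : ℤ, i - (N:ℤ) ≤ k → k < i + (N:ℤ) → dist (x (k + 1)) (f (x k)) ≤ θ) →
      ∀ j : ℤ, |j| ≤ (N:ℤ) → dist (x (i + j)) ((f ^ j) (x i)) ≤ η := by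
  intro η hη
  obtain ⟨θ₁, hθ₁, h₁⟩ := st9_chain_pos f hf N η hη
  obtain ⟨θ₂, hθ₂, h₂⟩ := st9_chain_neg f hf' N η hη
  refine ⟨min θ₁ θ₂, by positivity, fun x i hwin j hj => ?_⟩
  have hj' := abs_le.mp hj
  rcases le_or_gt 0 j with hj0 | hj0
  · have hm : j = (j.toNat : ℤ) := (Int.toNat_of_nonneg hj0).symm
    rw [hm]
    exact h₁ x i (fun k hk1 hk2 => (hwin k (by omega) hk2).trans (min_le_left _ _))
      j.toNat (by omega)
  · have hm : j = -(((-j).toNat : ℤ)) := by omega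
    rw [hm]
    have e : i + -(((-j).toNat : ℤ)) = i - (((-j).toNat : ℤ)) := by ring
    rw [e]
    exact h₂ x i (fun k hk1 hk2 => (hwin k hk1 (by omega)).trans (min_le_right _ _))
      (-j).toNat (by omega)

private lemma st9_close (f : Equiv.Perm M) (hf : Continuous (⇑f)) (hf' : Continuous (⇑f.symm)) :
    ∀ γ > (0:ℝ), ∃ θ > (0:ℝ), ∃ N : ℕ, ∀ (x : ℤ → M) (i : ℤ),
      (∀ k : ℤ, i - (N:ℤ) ≤ k → k < i + (N:ℤ) → dist (x (k + 1)) (f (x k)) ≤ θ) →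
      dtilde (shiftIter i x) (orbitMap f (x i)) < γ := by
  intro γ hγ
  obtain ⟨D, hD0, hD⟩ := st9_bound (M := M)
  set S : ℝ := ∑' j : ℤ, (2:ℝ) ^ (-|j|) with hSdef
  have hS0 : 0 < S := by
    have h := Summable.le_tsum st9_summable_base 0 (fun j _ => by positivity)
    simp only [abs_zero, neg_zero, zpow_zero] at h
    linarith
  have htail : Tendsto (fun N : ℕ =>
      D * ∑' j : {j : ℤ // j ∉ Finset.Icc (-(N:ℤ)) (N:ℤ)}, (2:ℝ) ^ (-|(j:ℤ)|)) atTop (𝓝 0) := by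
    have h1 : Tendsto (fun s : Finset ℤ => ∑' j : {j : ℤ // j ∉ s}, (2:ℝ) ^ (-|(j:ℤ)|))
        atTop (𝓝 0) := tendsto_tsum_compl_atTop_zero (fun j : ℤ => (2:ℝ) ^ (-|j|))
    have h2 : Tendsto (fun N : ℕ => Finset.Icc (-(N:ℤ)) (N:ℤ)) atTop atTop := by
      apply Filter.tendsto_atTop_finset_of_monotone
      · intro a b hab
        apply Finset.Icc_subset_Icc
        · have : (a:ℤ) ≤ (b:ℤ) := by exact_mod_cast hab
          omega
        · exact_mod_cast hab
      · intro j
        exact ⟨j.natAbs, by simp only [Finset.mem_Icc]; omega⟩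
    have h3 := (h1.comp h2).const_mul D
    simpa using h3
  have hγ2 : (0:ℝ) < γ / 2 := by positivity
  obtain ⟨N, hN⟩ := ((tendsto_order.1 htail).2 (γ / 2) hγ2).exists
  set η : ℝ := γ / (2 * (S + 1)) with hηdef
  have hη0 : 0 < η := by positivity
  obtain ⟨θ, hθ0, hchain⟩ := st9_chain f hf hf' N η hη0
  refine ⟨θ, hθ0, N, fun x i hwin => ?_⟩
  have hterm : ∀ j : ℤ, |j| ≤ (N:ℤ) →
      dist (shiftIter i x j) (orbitMap f (x i) j) ≤ η := by
    intro j hj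
    have h := hchain x i hwin j hj
    have e : j + i = i + j := by ring
    show dist (x (j + i)) ((f ^ j) (x i)) ≤ η
    rw [e]
    exact h
  have hsum := st9_summable_dtilde (shiftIter i x) (orbitMap f (x i))
  have hsplit := (Summable.sum_add_tsum_subtype_compl hsum (Finset.Icc (-(N:ℤ)) (N:ℤ))).symm
  have hpart1 : (∑ j ∈ Finset.Icc (-(N:ℤ)) (N:ℤ),
      (2:ℝ) ^ (-|j|) * dist (shiftIter i x j) (orbitMap f (x i) j)) ≤ η * S := by
    calc (∑ j ∈ Finset.Icc (-(N:ℤ)) (N:ℤ),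
        (2:ℝ) ^ (-|j|) * dist (shiftIter i x j) (orbitMap f (x i) j))
        ≤ ∑ j ∈ Finset.Icc (-(N:ℤ)) (N:ℤ), (2:ℝ) ^ (-|j|) * η := by
          apply Finset.sum_le_sum
          intro j hj
          rw [Finset.mem_Icc] at hj
          exact mul_le_mul_of_nonneg_left (hterm j (by rw [abs_le]; omega)) (by positivity)
      _ = (∑ j ∈ Finset.Icc (-(N:ℤ)) (N:ℤ), (2:ℝ) ^ (-|j|)) * η := by
          rw [← Finset.sum_mul]
      _ ≤ S * η := mul_le_mul_of_nonneg_right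
          (Summable.sum_le_tsum _ (fun j _ => by positivity) st9_summable_base) hη0.le
      _ = η * S := mul_comm _ _
  have hpart2 : (∑' j : {j : ℤ // j ∉ Finset.Icc (-(N:ℤ)) (N:ℤ)},
      (2:ℝ) ^ (-|(j:ℤ)|) * dist (shiftIter i x (j:ℤ)) (orbitMap f (x i) (j:ℤ)))
      ≤ D * ∑' j : {j : ℤ // j ∉ Finset.Icc (-(N:ℤ)) (N:ℤ)}, (2:ℝ) ^ (-|(j:ℤ)|) := by
    rw [← tsum_mul_left]
    apply Summable.tsum_le_tsum
    · intro j
      calc (2:ℝ) ^ (-|(j:ℤ)|) * dist (shiftIter i x (j:ℤ)) (orbitMap f (x i) (j:ℤ))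
          ≤ (2:ℝ) ^ (-|(j:ℤ)|) * D := mul_le_mul_of_nonneg_left (hD _ _) (by positivity)
        _ = D * (2:ℝ) ^ (-|(j:ℤ)|) := mul_comm _ _
    · exact hsum.subtype _
    · exact (st9_summable_base.mul_left D).subtype _
  have hfin : η * S < γ / 2 := by
    have e : η * (S + 1) = γ / 2 := by
      rw [hηdef]
      field_simp
    nlinarith [hη0]
  show dtilde (shiftIter i x) (orbitMap f (x i)) < γ
  have hdt : dtilde (shiftIter i x) (orbitMap f (x i))
      = (∑ j ∈ Finset.Icc (-(N:ℤ)) (N:ℤ),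
          (2:ℝ) ^ (-|j|) * dist (shiftIter i x j) (orbitMap f (x i) j))
        + ∑' j : {j : ℤ // j ∉ Finset.Icc (-(N:ℤ)) (N:ℤ)},
            (2:ℝ) ^ (-|(j:ℤ)|) * dist (shiftIter i x (j:ℤ)) (orbitMap f (x i) (j:ℤ)) := hsplit
  rw [hdt]
  have := hN
  calc _ ≤ η * S + D * ∑' j : {j : ℤ // j ∉ Finset.Icc (-(N:ℤ)) (N:ℤ)}, (2:ℝ) ^ (-|(j:ℤ)|) :=
        add_le_add hpart1 hpart2
    _ < γ / 2 + γ / 2 := by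
        apply add_lt_add_of_lt_of_le hfin
        exact hN.le
    _ = γ := by ring

private lemma st9_claimC (f : Equiv.Perm M) (hf : Continuous (⇑f)) (hf' : Continuous (⇑f.symm))
    (δ : ℝ) (Sh : (ℤ → M) → M) (hPo : IsPseudoOrbitMap f δ Sh) :
    ∀ ε > (0:ℝ), ∃ γ > (0:ℝ), ∀ y ∈ PseudoOrbits (⇑f) δ, ∀ p : M,
      dtilde y (orbitMap f p) < γ → dist (Sh y) p ≤ ε := by
  intro ε hε
  by_contra hcon
  push_neg at hcon
  have hchoose : ∀ n : ℕ, ∃ y ∈ PseudoOrbits (⇑f) δ, ∃ p : M,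
      dtilde y (orbitMap f p) < 1 / ((n:ℝ) + 1) ∧ ε < dist (Sh y) p := by
    intro n
    exact hcon (1 / ((n:ℝ) + 1)) (by positivity)
  choose Y hY P h1 h2 using hchoose
  have hclosed : IsClosed (PseudoOrbits (⇑f) δ) := by
    have he : PseudoOrbits (⇑f) δ
        = ⋂ i : ℤ, {x : ℤ → M | dist (x (i + 1)) (f (x i)) ≤ δ} := by
      ext x
      simp only [PseudoOrbits, IsPseudoOrbit, Set.mem_iInter, Set.mem_setOf_eq]
    rw [he]
    exact isClosed_iInter fun i => isClosed_le
      ((continuous_apply (i + 1)).dist (hf.comp (continuous_apply i))) continuous_const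
  have hcpt : IsCompact (PseudoOrbits (⇑f) δ) := hclosed.isCompact
  obtain ⟨y, hy, φ, hφ, hYφ⟩ := hcpt.isSeqCompact hY
  obtain ⟨p, -, ψ, hψ, hPψ⟩ :=
    (isCompact_univ : IsCompact (Set.univ : Set M)).isSeqCompact (fun n => Set.mem_univ (P (φ n)))
  have hYconv : Tendsto (fun n => Y (φ (ψ n))) atTop (𝓝 y) := hYφ.comp hψ.tendsto_atTop
  have hPconv : Tendsto (fun n => P (φ (ψ n))) atTop (𝓝 p) := hPψ
  have hdt : Tendsto (fun n => dtilde (Y (φ (ψ n))) (orbitMap f (P (φ (ψ n)))))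
      atTop (𝓝 0) := by
    apply squeeze_zero (fun n => st9_dtilde_nonneg _ _)
      (fun n => ?_) tendsto_one_div_add_atTop_nhds_zero_nat
    have hle : (n:ℝ) + 1 ≤ ((φ (ψ n) : ℕ) : ℝ) + 1 := by
      have := (hφ.comp hψ).le_apply (x := n)
      exact_mod_cast Nat.succ_le_succ this
    exact le_trans (h1 (φ (ψ n))).le (one_div_le_one_div_of_le (by positivity) hle)
  have hcoord : y = orbitMap f p := by
    funext j
    have t1 : Tendsto (fun n => (Y (φ (ψ n))) j) atTop (𝓝 (y j)) := tendsto_pi_nhds.mp hYconv j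
    have t2 : Tendsto (fun n => (f ^ j) (P (φ (ψ n)))) atTop (𝓝 ((f ^ j) p)) :=
      ((st9_cont_zpow f hf hf' j).tendsto p).comp hPconv
    have hb : (0:ℝ) < (2:ℝ) ^ (-|j|) := by positivity
    have t3 : Tendsto (fun n => dist ((Y (φ (ψ n))) j) ((f ^ j) (P (φ (ψ n)))))
        atTop (𝓝 0) := by
      apply squeeze_zero (fun n => dist_nonneg) (fun n => ?_)
        (by simpa using hdt.const_mul (((2:ℝ) ^ (-|j|))⁻¹))
      have hc := st9_coord (Y (φ (ψ n))) (orbitMap f (P (φ (ψ n)))) j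
      rw [← le_div_iff₀' hb] at hc
      calc dist ((Y (φ (ψ n))) j) ((f ^ j) (P (φ (ψ n))))
            ≤ dtilde (Y (φ (ψ n))) (orbitMap f (P (φ (ψ n)))) / (2:ℝ) ^ (-|j|) := hc
          _ = (2:ℝ) ^ |j| * dtilde (Y (φ (ψ n))) (orbitMap f (P (φ (ψ n)))) := by
              rw [div_eq_inv_mul, zpow_neg, inv_inv]
    have t4 : Tendsto (fun n => (f ^ j) (P (φ (ψ n)))) atTop (𝓝 (y j)) := by
      apply t1.congr_dist
      simpa [dist_comm] using t3
    exact (tendsto_nhds_unique t2 t4).symm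
  have hSh : Tendsto (fun n => Sh (Y (φ (ψ n)))) atTop (𝓝 (Sh y)) := by
    have hcw : ContinuousWithinAt Sh (PseudoOrbits (⇑f) δ) y := hPo.2.1 y hy
    exact hcw.tendsto.comp (tendsto_nhdsWithin_iff.mpr
      ⟨hYconv, Filter.Eventually.of_forall (fun n => hY _)⟩)
  have hShy : Sh y = p := by rw [hcoord]; exact hPo.2.2 p
  have hd0 : Tendsto (fun n => dist (Sh (Y (φ (ψ n)))) (P (φ (ψ n)))) atTop (𝓝 0) := by
    have := hSh.dist hPconv
    rwa [hShy, dist_self] at this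
  obtain ⟨n, hn⟩ := ((tendsto_order.1 hd0).2 ε hε).exists
  exact absurd hn (not_lt.mpr (h2 (φ (ψ n))).le)

end Stmt9Aux

/-- Proposition 5.2: every self-tuning pseudo-orbit map is an
L-shadowing map. -/
theorem stmt9 {M : Type*} [MetricSpace M] [CompactSpace M]
    (f : Equiv.Perm M) (hf : Continuous (⇑f)) (hf' : Continuous (⇑f.symm))
    (δ : ℝ) (Sh : (ℤ → M) → M)
    (hPo : IsPseudoOrbitMap f δ Sh) (hst : HasSelfTuning f δ Sh) :
    IsLShadowingMap f δ Sh := by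
  refine ⟨hPo, ?_⟩
  intro ε hε
  have claim := st9_claimC f hf hf' δ Sh hPo
  obtain ⟨γ₁, hγ₁, h₁⟩ := hst (ε / 2) (by positivity)
  obtain ⟨γ₂, hγ₂, h₂⟩ := claim (ε / 2) (by positivity)
  obtain ⟨θ, hθ, N, hclose⟩ := st9_close f hf hf' (min γ₁ γ₂) (by positivity)
  have hδ0 : 0 < δ := hPo.1
  refine ⟨min θ δ, by positivity, min_le_right _ _, fun x hx hlim => ?_⟩
  have hxδ : x ∈ PseudoOrbits (⇑f) δ := st9_PO_mono (min_le_right θ δ) hx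
  constructor
  · intro i
    have hwin : ∀ k : ℤ, i - (N:ℤ) ≤ k → k < i + (N:ℤ) →
        dist (x (k + 1)) (f (x k)) ≤ θ :=
      fun k _ _ => (hx k).trans (min_le_left θ δ)
    have hdt := hclose x i hwin
    have ha := h₁ x hxδ i (hdt.trans_le (min_le_left _ _))
    have hb := h₂ (shiftIter i x) (st9_shift_mem hxδ i) (x i) (by
      exact hdt.trans_le (min_le_right _ _))
    calc dist ((f ^ i) (Sh x)) (x i)
        ≤ dist ((f ^ i) (Sh x)) (Sh (shiftIter i x)) + dist (Sh (shiftIter i x)) (x i) :=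
          dist_triangle _ _ _
      _ ≤ ε / 2 + ε / 2 := add_le_add ha hb
      _ = ε := by ring
  · rw [Metric.tendsto_nhds]
    intro ε' hε'
    obtain ⟨γ₁', hγ₁', h₁'⟩ := hst (ε' / 3) (by positivity)
    obtain ⟨γ₂', hγ₂', h₂'⟩ := claim (ε' / 3) (by positivity)
    obtain ⟨θ', hθ', N', hclose'⟩ := st9_close f hf hf' (min γ₁' γ₂') (by positivity)
    have hB : {k : ℤ | ¬ dist (x (k + 1)) (f (x k)) ≤ θ'}.Finite := by
      have hev : ∀ᶠ k in cofinite, dist (f (x k)) (x (k + 1)) < θ' :=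
        (tendsto_order.1 hlim).2 θ' hθ'
      apply (Filter.eventually_cofinite.mp hev).subset
      intro k hk
      simp only [Set.mem_setOf_eq] at hk ⊢
      intro hlt
      exact hk (le_of_lt (by rwa [dist_comm] at hlt))
    have hwinE : ∀ᶠ i in cofinite, ∀ k : ℤ, i - (N':ℤ) ≤ k → k < i + (N':ℤ) →
        dist (x (k + 1)) (f (x k)) ≤ θ' := by
      rw [Filter.eventually_cofinite]
      apply Set.Finite.subset (hB.biUnion
        (fun k _ => Set.finite_Ioc (k - (N':ℤ)) (k + (N':ℤ))))
      intro i hi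
      simp only [Set.mem_setOf_eq] at hi
      push_neg at hi
      obtain ⟨k, hk1, hk2, hk3⟩ := hi
      exact Set.mem_biUnion (show k ∈ {k : ℤ | ¬ dist (x (k + 1)) (f (x k)) ≤ θ'} from
        not_le.mpr hk3) (by simp only [Set.mem_Ioc]; omega)
    filter_upwards [hwinE] with i hwin
    have hdt := hclose' x i hwin
    have ha := h₁' x hxδ i (hdt.trans_le (min_le_left _ _))
    have hb := h₂' (shiftIter i x) (st9_shift_mem hxδ i) (x i) (by
      exact hdt.trans_le (min_le_right _ _))
    have hsum : dist ((f ^ i) (Sh x)) (x i) ≤ ε' / 3 + ε' / 3 :=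
      le_trans (dist_triangle _ (Sh (shiftIter i x)) _) (add_le_add ha hb)
    rw [Real.dist_eq, sub_zero, abs_of_nonneg dist_nonneg]
    linarith
end

section
/- The following are equivalent: (1) there is δ > 0 such that Sh_σ(σ·α) = σ(Sh_σ(α)) for all α ∈ M̃^ℤ(σ,δ); (2) M is finite; (3) σ : M̃ → M̃ is expansive. -/
open Filter Metric Topology

variable {M : Type*}

/-- The shadowing map `Sh_σ` for the shift on `M̃ = M^ℤ`: `(Sh_σ(α))_i = (α_i)_0`. -/
def ShSigma {M : Type*} (α : ℤ → ℤ → M) : ℤ → M := fun i => α i 0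

section AuxStmt12

lemma two_zpow_neg_abs' (i : ℤ) : (2:ℝ)^(-|i|) = (1/2:ℝ)^(i.natAbs) := by
  rw [Int.abs_eq_natAbs, zpow_neg, zpow_natCast, one_div, inv_pow]

lemma hasSum_two_zpow_abs : HasSum (fun i : ℤ => (2:ℝ)^(-|i|)) 3 := by
  have e : (fun i : ℤ => (2:ℝ)^(-|i|)) = fun i : ℤ => (1/2:ℝ)^(i.natAbs) :=
    funext two_zpow_neg_abs'
  rw [e]
  have hs2 : HasSum (fun n : ℕ => (1/2:ℝ)^(((n:ℤ)).natAbs)) 2 := by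
    have e2 : (fun n : ℕ => (1/2:ℝ)^(((n:ℤ)).natAbs)) = fun n : ℕ => (1/2:ℝ)^n := by
      funext n; rw [Int.natAbs_natCast]
    rw [e2]; exact hasSum_geometric_two
  have hs1 : HasSum (fun n : ℕ => (1/2:ℝ)^((-((n:ℤ)+1)).natAbs)) 1 := by
    have e1 : (fun n : ℕ => (1/2:ℝ)^((-((n:ℤ)+1)).natAbs))
        = fun n : ℕ => (1/2:ℝ)^n * (1/2) := by
      funext n
      rw [Int.natAbs_neg, show ((n:ℤ)+1) = ((n+1 : ℕ) : ℤ) by push_cast; ring,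
        Int.natAbs_natCast, pow_succ]
    rw [e1]
    have := hasSum_geometric_two.mul_right (1/2:ℝ)
    norm_num at this
    convert this using 2
  have h := HasSum.of_nat_of_neg_add_one (f := fun i : ℤ => (1/2:ℝ)^(i.natAbs)) hs2 hs1
  norm_num at h
  exact h

lemma summable_dtilde_aux {M : Type*} [MetricSpace M] [CompactSpace M] (x y : ℤ → M) :
    Summable (fun i : ℤ => (2:ℝ)^(-|i|) * dist (x i) (y i)) := by
  refine Summable.of_nonneg_of_le (fun i => mul_nonneg (by positivity) dist_nonneg)
    (fun i => ?_)
    (hasSum_two_zpow_abs.summable.mul_right (Metric.diam (Set.univ : Set M)))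
  exact mul_le_mul_of_nonneg_left
    (Metric.dist_le_diam_of_mem isCompact_univ.isBounded (Set.mem_univ _) (Set.mem_univ _))
    (by positivity)

lemma dist_zero_le_dtilde {M : Type*} [MetricSpace M] [CompactSpace M] (x y : ℤ → M) :
    dist (x 0) (y 0) ≤ dtilde x y := by
  have h := Summable.le_tsum (summable_dtilde_aux x y) 0
    (fun j _ => mul_nonneg (by positivity) dist_nonneg)
  simpa [dtilde] using h

lemma dtilde_const_eq {M : Type*} [MetricSpace M] (p q : M) :
    dtilde (fun _ : ℤ => p) (fun _ : ℤ => q) = 3 * dist p q := by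
  have h := (hasSum_two_zpow_abs.mul_right (dist p q)).tsum_eq
  simpa [dtilde, mul_comm] using h

lemma exists_min_dist {M : Type*} [MetricSpace M] [Finite M] :
    ∃ r : ℝ, 0 < r ∧ ∀ p q : M, p ≠ q → r ≤ dist p q := by
  have : Fintype M := Fintype.ofFinite M
  classical
  set s : Finset ℝ := (Finset.univ.filter (fun pq : M × M => pq.1 ≠ pq.2)).image
    (fun pq => dist pq.1 pq.2) with hs_def
  have hmem' : ∀ p q : M, p ≠ q → dist p q ∈ s := by
    intro p q hpq
    simp only [hs_def, Finset.mem_image, Finset.mem_filter, Finset.mem_univ, true_and]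
    exact ⟨(p, q), hpq, rfl⟩
  have hpos : ∀ r ∈ s, 0 < r := by
    intro r hr
    simp only [hs_def, Finset.mem_image, Finset.mem_filter, Finset.mem_univ, true_and] at hr
    obtain ⟨⟨a, b⟩, hab, habd⟩ := hr
    rw [← habd]
    exact dist_pos.2 hab
  by_cases hs : s.Nonempty
  · exact ⟨s.min' hs, hpos _ (s.min'_mem hs),
      fun p q hpq => Finset.min'_le s _ (hmem' p q hpq)⟩
  · exact ⟨1, one_pos, fun p q hpq => absurd ⟨dist p q, hmem' p q hpq⟩ hs⟩

lemma exists_close_pair {M : Type*} [MetricSpace M] [CompactSpace M] (hM : Infinite M)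
    {ε : ℝ} (hε : 0 < ε) : ∃ p q : M, p ≠ q ∧ dist p q < ε := by
  obtain ⟨t, htf, hcov⟩ := Metric.totallyBounded_iff.mp (isCompact_univ : IsCompact (Set.univ : Set M)).totallyBounded
    (ε/2) (by positivity)
  by_contra hc
  push_neg at hc
  have hfin : (Set.univ : Set M).Finite := by
    refine Set.Finite.subset (htf.biUnion fun y _ => ?_) hcov
    refine Set.Subsingleton.finite ?_
    intro a ha b hb
    by_contra hab
    have h1 : ε ≤ dist a b := hc a b hab
    have h2 : dist a b < ε := by
      calc dist a b ≤ dist a y + dist b y := dist_triangle_right a b y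
        _ < ε/2 + ε/2 := add_lt_add (Metric.mem_ball.mp ha) (Metric.mem_ball.mp hb)
        _ = ε := by ring
    linarith
  exact Set.infinite_univ hfin

end AuxStmt12

/-- Proposition 6.7: the following are equivalent: (1) there is `δ > 0`
such that `Sh_σ(σ·α) = σ(Sh_σ(α))` for every `δ`-pseudo-orbit `α` of the shift
`σ : M̃ → M̃` (with `σ` acting coordinatewise on `M̃^ℤ`); (2) `M` is finite;
(3) `σ : M̃ → M̃` is expansive with respect to `d̃_s`. -/
theorem stmt12 {M : Type*} [MetricSpace M] [CompactSpace M] :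
    ((∃ δ : ℝ, 0 < δ ∧ ∀ α : ℤ → ℤ → M,
        (∀ i : ℤ, dtilde (shiftSeq (α i)) (α (i + 1)) ≤ δ) →
        ShSigma (fun i => shiftSeq (α i)) = shiftSeq (ShSigma α)) ↔ Finite M) ∧
    (Finite M ↔ ∃ ξ : ℝ, 0 < ξ ∧ ∀ x y : ℤ → M, x ≠ y →
        ∃ i : ℤ, ξ < dtilde (shiftIter i x) (shiftIter i y)) := by
  constructor
  · constructor
    · -- (1) → Finite
      rintro ⟨δ, hδ, hcomm⟩
      by_contra hfin
      have hM : Infinite M := not_finite_iff_infinite.mp hfin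
      obtain ⟨p, q, hpq, hd⟩ := exists_close_pair hM (show (0:ℝ) < δ/3 by linarith)
      set α : ℤ → ℤ → M := fun i _ => if i ≤ 0 then p else q with hα
      have hps : ∀ i : ℤ, dtilde (shiftSeq (α i)) (α (i + 1)) ≤ δ := by
        intro i
        have he : shiftSeq (α i) = fun _ : ℤ => if i ≤ 0 then p else q := rfl
        have he2 : α (i+1) = fun _ : ℤ => if i+1 ≤ 0 then p else q := rfl
        rw [he, he2, dtilde_const_eq]
        have : dist (if i ≤ 0 then p else q) (if i+1 ≤ 0 then p else q) ≤ dist p q := by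
          by_cases h1 : i ≤ 0 <;> by_cases h2 : i+1 ≤ 0 <;>
            simp [h1, h2, dist_comm, dist_nonneg, le_refl]
        nlinarith [dist_nonneg (x := p) (y := q)]
      have := congrFun (hcomm α hps) 0
      simp only [ShSigma, shiftSeq, hα] at this
      norm_num at this
      exact hpq this
    · -- Finite → (1)
      intro hfin
      obtain ⟨r, hr, hmin⟩ := exists_min_dist (M := M)
      refine ⟨r/2, by linarith, fun α hps => ?_⟩
      funext i
      show (shiftSeq (α i)) 0 = α (i+1) 0
      by_contra hne
      have h1 : r ≤ dist ((shiftSeq (α i)) 0) (α (i+1) 0) := hmin _ _ hne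
      have h2 : dist ((shiftSeq (α i)) 0) (α (i+1) 0) ≤ dtilde (shiftSeq (α i)) (α (i+1)) :=
        dist_zero_le_dtilde _ _
      have h3 := hps i
      linarith
  · constructor
    · -- Finite → expansive
      intro hfin
      obtain ⟨r, hr, hmin⟩ := exists_min_dist (M := M)
      refine ⟨r/2, by linarith, fun x y hxy => ?_⟩
      obtain ⟨i, hne⟩ := Function.ne_iff.mp hxy
      refine ⟨i, ?_⟩
      have h1 : r ≤ dist (x i) (y i) := hmin _ _ hne
      have h2 : dist ((shiftIter i x) 0) ((shiftIter i y) 0)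
          ≤ dtilde (shiftIter i x) (shiftIter i y) := dist_zero_le_dtilde _ _
      have h3 : (shiftIter i x) 0 = x i := by simp [shiftIter]
      have h4 : (shiftIter i y) 0 = y i := by simp [shiftIter]
      rw [h3, h4] at h2
      linarith
    · -- expansive → Finite
      rintro ⟨ξ, hξ, hexp⟩
      by_contra hfin
      have hM : Infinite M := not_finite_iff_infinite.mp hfin
      obtain ⟨p, q, hpq, hd⟩ := exists_close_pair hM (show (0:ℝ) < ξ/3 by linarith)
      have hxy : (fun _ : ℤ => p) ≠ (fun _ : ℤ => q) := by
        intro h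
        exact hpq (congrFun h 0)
      obtain ⟨i, hi⟩ := hexp _ _ hxy
      have he : shiftIter i (fun _ : ℤ => p) = fun _ : ℤ => p := rfl
      have he2 : shiftIter i (fun _ : ℤ => q) = fun _ : ℤ => q := rfl
      rw [he, he2, dtilde_const_eq] at hi
      linarith
end

section
/- If f admits a shift-invariant shadowing map, then f is topologically stable. -/
open Filter Metric Topology

variable {M : Type*}

/-- The `C⁰` distance between two homeomorphisms. -/
noncomputable def dC0 {M : Type*} [MetricSpace M] (f g : Equiv.Perm M) : ℝ :=
  ⨆ p : M, max (dist (f p) (g p)) (dist (f.symm p) (g.symm p))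

/-- Topological stability (Walters). -/
def TopologicallyStable {M : Type*} [MetricSpace M] (f : Equiv.Perm M) : Prop :=
  ∀ ε > (0:ℝ), ∃ δ > (0:ℝ), ∀ g : Equiv.Perm M, Continuous (⇑g) → Continuous (⇑g.symm) →
    dC0 f g < δ →
    ∃ h : M → M, Continuous h ∧ (⨆ p : M, dist (h p) p) < ε ∧ ∀ p : M, f (h p) = h (g p)


section AuxStmt13

variable {M : Type*} [MetricSpace M]

lemma pseudoOrbits_mono' (f : M → M) {a b : ℝ} (h : a ≤ b) :
    PseudoOrbits f a ⊆ PseudoOrbits f b := fun _ hx i => (hx i).trans h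

lemma isClosed_pseudoOrbits' (f : M → M) (hf : Continuous f) (c : ℝ) :
    IsClosed (PseudoOrbits f c) := by
  have : PseudoOrbits f c = ⋂ i : ℤ, {x : ℤ → M | dist (x (i + 1)) (f (x i)) ≤ c} := by
    ext x; simp [PseudoOrbits, IsPseudoOrbit, Set.mem_iInter]
  rw [this]
  exact isClosed_iInter fun i => isClosed_le
    ((continuous_apply (i + 1)).dist (hf.comp (continuous_apply i))) continuous_const

lemma continuous_perm_zpow' (g : Equiv.Perm M) (hg : Continuous (⇑g))
    (hg' : Continuous (⇑g.symm)) (i : ℤ) : Continuous fun p : M => (g ^ i) p := by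
  induction i using Int.induction_on with
  | zero => simpa using (show Continuous fun p : M => p from continuous_id)
  | succ n ih =>
      have h : ∀ p : M, (g ^ ((n : ℤ) + 1)) p = (g ^ (n : ℤ)) (g p) := by
        intro p; rw [zpow_add_one]; rfl
      simpa [h] using (show Continuous fun p : M => (g ^ (n : ℤ)) (g p) from ih.comp hg)
  | pred n ih =>
      have h : ∀ p : M, (g ^ (-(n : ℤ) - 1)) p = (g ^ (-(n : ℤ))) (g.symm p) := by
        intro p; rw [zpow_sub_one]; rfl
      simpa [h] using (show Continuous fun p : M => (g ^ (-(n : ℤ))) (g.symm p) from ih.comp hg')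

lemma dist_sh_zero' [CompactSpace M] (f : Equiv.Perm M) (hf : Continuous (⇑f))
    {δ : ℝ} {Sh : (ℤ → M) → M} (hPo : IsPseudoOrbitMap f δ Sh) :
    ∀ ε > (0:ℝ), ∃ γ : ℝ, 0 < γ ∧ γ ≤ δ ∧
      ∀ x ∈ PseudoOrbits (⇑f) γ, dist (Sh x) (x 0) ≤ ε := by
  obtain ⟨hδ, hcont, horb⟩ := hPo
  intro ε hε
  by_contra hcon
  push_neg at hcon
  have hγpos : ∀ n : ℕ, 0 < δ / (n + 1 : ℝ) := fun n => div_pos hδ (by positivity)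
  have hγle : ∀ n : ℕ, δ / (n + 1 : ℝ) ≤ δ := fun n => by
    have hn : (0:ℝ) ≤ n := n.cast_nonneg
    rw [div_le_iff₀ (by positivity)]; nlinarith
  set V : ℕ → Set (ℤ → M) := fun n =>
    PseudoOrbits (⇑f) (δ / (n + 1 : ℝ)) ∩
      (PseudoOrbits (⇑f) δ ∩ (fun x => dist (Sh x) (x 0)) ⁻¹' Set.Ici ε) with hV
  have hclosed : ∀ n, IsClosed (V n) := by
    intro n
    have hF : ContinuousOn (fun x : ℤ → M => dist (Sh x) (x 0)) (PseudoOrbits (⇑f) δ) :=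
      by have := continuous_dist.comp_continuousOn (ContinuousOn.prodMk hcont ((continuous_apply 0).continuousOn)); exact this
    exact (isClosed_pseudoOrbits' _ hf _).inter
      (hF.preimage_isClosed_of_isClosed (isClosed_pseudoOrbits' _ hf _) isClosed_Ici)
  have hne : ∀ n, (V n).Nonempty := by
    intro n
    obtain ⟨x, hx1, hx2⟩ := hcon _ (hγpos n) (hγle n)
    exact ⟨x, hx1, pseudoOrbits_mono' _ (hγle n) hx1, hx2.le⟩
  have hsub : ∀ n, V (n + 1) ⊆ V n := by
    intro n
    apply Set.inter_subset_inter_left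
    apply pseudoOrbits_mono'
    gcongr
    · push_cast; linarith
  obtain ⟨x, hx⟩ := IsCompact.nonempty_iInter_of_sequence_nonempty_isCompact_isClosed
    V hsub hne ((hclosed 0).isCompact) hclosed
  simp only [Set.mem_iInter] at hx
  have hstep : ∀ i : ℤ, x (i + 1) = f (x i) := by
    intro i
    have h0 : dist (x (i + 1)) (f (x i)) ≤ 0 := by
      refine ge_of_tendsto ((tendsto_const_div_atTop_nhds_zero_nat δ).comp
        (tendsto_add_atTop_nat 1)) (Filter.Eventually.of_forall fun n => ?_)
      have := (hx n).1 i
      simpa [Function.comp] using this.trans_eq (by push_cast; ring_nf)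
    rw [← dist_eq_zero]
    exact le_antisymm h0 dist_nonneg
  have hxe : x = orbitMap f (x 0) := by
    funext i
    induction i using Int.induction_on with
    | zero => simp [orbitMap]
    | succ n ih =>
        rw [hstep n, ih, orbitMap, orbitMap]
        rw [show ((n : ℤ) + 1) = 1 + n by ring, zpow_add, zpow_one]; rfl
    | pred n ih =>
        have h1 : x (-(n : ℤ)) = f (x (-(n : ℤ) - 1)) := by
          have := hstep (-(n : ℤ) - 1); rwa [show (-(n : ℤ) - 1 + 1) = -(n : ℤ) by ring] at this
        have h2 : x (-(n : ℤ) - 1) = f.symm (x (-(n : ℤ))) := by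
          rw [h1]; simp
        rw [h2, ih]
        have h3 : (f : Equiv.Perm M) ^ (-(n : ℤ) - 1) = f⁻¹ * f ^ (-(n : ℤ)) := by
          rw [show (-(n : ℤ) - 1) = -1 + -(n : ℤ) by ring, zpow_add, zpow_neg_one]
        simp [orbitMap, h3, Equiv.Perm.mul_apply, Equiv.Perm.inv_def]
  have h5 : Sh x = x 0 := by
    conv_lhs => rw [hxe]
    rw [horb]
  have hge : ε ≤ dist (Sh x) (x 0) := (hx 0).2.2
  rw [h5, dist_self] at hge
  linarith

end AuxStmt13

/-- Proposition 6.11: if `f` admits a shift-invariant shadowing map then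
`f` is topologically stable. -/
theorem stmt13 {M : Type*} [MetricSpace M] [CompactSpace M]
    (f : Equiv.Perm M) (hf : Continuous (⇑f)) (hf' : Continuous (⇑f.symm))
    (hsh : ∃ δ : ℝ, ∃ Sh : (ℤ → M) → M, IsShadowingMap f δ Sh ∧ ShiftInvariant f δ Sh) :
    TopologicallyStable f := by
  obtain ⟨δ, Sh, ⟨hPo, _hcond⟩, hinv⟩ := hsh
  intro ε hε
  obtain ⟨γ, hγ0, hγδ, hγ⟩ := dist_sh_zero' f hf hPo (ε / 2) (by positivity)
  refine ⟨γ, hγ0, fun g hg hg' hdist => ?_⟩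
  -- every point of M has distance ≤ some bound
  obtain ⟨C, hC⟩ : ∃ C : ℝ, ∀ a b : M, dist a b ≤ C := by
    obtain ⟨C, hC⟩ := Metric.isBounded_iff.mp ((isCompact_univ (X := M)).isBounded)
    exact ⟨C, fun a b => hC (Set.mem_univ a) (Set.mem_univ b)⟩
  have hbdd : BddAbove (Set.range fun p : M =>
      max (dist (f p) (g p)) (dist (f.symm p) (g.symm p))) := by
    refine ⟨C, ?_⟩
    rintro r ⟨p, rfl⟩
    exact max_le (hC _ _) (hC _ _)
  have hdC0 : ∀ q : M, dist (f q) (g q) ≤ dC0 f g := fun q =>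
    le_trans (le_max_left _ _) (le_ciSup hbdd q)
  -- each g-orbit is a γ-pseudo-orbit of f
  have hshift : ∀ p : M, shiftSeq (orbitMap g p) = orbitMap g (g p) := by
    intro p
    funext i
    show (g ^ (i + 1)) p = (g ^ i) (g p)
    rw [zpow_add_one]; rfl
  have horbP : ∀ p : M, orbitMap g p ∈ PseudoOrbits (⇑f) γ := by
    intro p i
    have h1 : orbitMap g p (i + 1) = g (orbitMap g p i) := by
      show (g ^ (i + 1)) p = g ((g ^ i) p)
      rw [show i + 1 = 1 + i by ring, zpow_add, zpow_one]; rfl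
    rw [h1]
    calc dist (g (orbitMap g p i)) (f (orbitMap g p i))
        = dist (f (orbitMap g p i)) (g (orbitMap g p i)) := dist_comm _ _
      _ ≤ dC0 f g := hdC0 _
      _ ≤ γ := hdist.le
  have horbδ : ∀ p : M, orbitMap g p ∈ PseudoOrbits (⇑f) δ := fun p =>
    pseudoOrbits_mono' _ hγδ (horbP p)
  refine ⟨fun p => Sh (orbitMap g p), ?_, ?_, ?_⟩
  · -- continuity
    have hco : Continuous fun p : M => orbitMap g p :=
      continuous_pi fun i => continuous_perm_zpow' g hg hg' i
    exact hPo.2.1.comp_continuous hco horbδ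
  · -- sup distance < ε
    have hle : ∀ p : M, dist (Sh (orbitMap g p)) p ≤ ε / 2 := by
      intro p
      have := hγ (orbitMap g p) (horbP p)
      simpa [orbitMap] using this
    calc (⨆ p : M, dist (Sh (orbitMap g p)) p) ≤ ε / 2 :=
          Real.iSup_le hle (by positivity)
      _ < ε := by linarith
  · -- semiconjugacy
    intro p
    rw [← hinv (orbitMap g p) (horbδ p), hshift p]
end
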